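/- arXiv:1405.2681 — 5 statements merged into one kernel-verified Lean document; each statement's English description precedes it below -/
import Mathlib

section
/- Let λ > 0 and let m̲ ≥ 2 be an integer with N ≥ m̲ almost surely (so m̲ = essinf N > 1). Assume E[(min_{1≤i≤p} Σ_{j=1}^p (A_1)_{ij})^{−λ}] < ∞ and E[∏_{k=1}^{m̲} (min_{1≤i≤p} Σ_{j=1}^p (A_k)_{ij})^{−λ}] < ∞. Then: (1) φ(t) = O(‖t‖^{−m̲λ}) as ‖t‖ → ∞; (2) for every fixed nonzero y ∈ [0,∞)^p, P(y·Z ≤ x) = O(x^{m̲λ}) as x → 0; and (3) for every fixed nonzero y ∈ [0,∞)^p and every 0 < λ₁ < λ, E[(y·Z)^{−m̲λ₁}] < ∞. -/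
open MeasureTheory ProbabilityTheory Filter Finset
open scoped ENNReal Topology

/-!
Write `‖t‖ = ∑ j, t j` and let `h s` be the supremum of `φ t` over `t ≥ 0` with `‖t‖ ≥ s`.
Since `‖t A_k‖ ≥ ‖t‖ M_k`, where `M_k` is the minimal row sum of `A_k`, and since `0 ≤ φ ≤ 1` and
`N ≥ m̲`, the functional equation gives `h s ≤ E ∏_{k ≤ m̲} h (s M_k)`.

Splitting according to whether `M_1` and some other `M_k` exceed `c`, and applying Markov's
inequality to the negative moments of `M_1` and of `∏ M_k`, this becomes
`h s ≤ 2 h (s c) ^ 2 + K c ^ λ`; iterating along `s ↦ s ^ 2` with `c = s ^ (-1/2)` gives some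
polynomial decay `h s = O(s ^ (-β))`. Inserting a bound `h = O(s ^ (-γ))` with `γ ≤ λ` back into
`h s ≤ E ∏ h (s M_k)` improves it to `O(s ^ (-m̲ γ))`, so finitely many rounds reach
`O(s ^ (-m̲ λ))`. The small-ball bound then follows from Chernoff's inequality
`P(y·Z ≤ x) ≤ e φ(y / x)`, and the negative moments from it by a dyadic decomposition.
-/

def PowerDecay (h : ℝ → ℝ) (γ : ℝ) : Prop :=
  ∃ C, ∀ u, 0 < u → h u ≤ C * u ^ (-γ)

section PowerDecay

variable {h : ℝ → ℝ}

lemma powerDecay_of_forall_ge (h1 : ∀ u, h u ≤ 1) {β S C : ℝ} (hβ : 0 ≤ β) (hS : 0 < S)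
    (hbound : ∀ u, S ≤ u → h u ≤ C * u ^ (-β)) : PowerDecay h β := by
  refine ⟨max C (S ^ β), fun u hu => ?_⟩
  rcases le_or_gt S u with hSu | huS
  · exact (hbound u hSu).trans <| by gcongr; exact le_max_left _ _
  · calc h u ≤ 1 := h1 u
      _ ≤ (S / u) ^ β := Real.one_le_rpow ((one_le_div hu).2 huS.le) hβ
      _ = S ^ β * u ^ (-β) := by rw [Real.div_rpow hS.le hu.le, Real.rpow_neg hu.le, div_eq_mul_inv]
      _ ≤ max C (S ^ β) * u ^ (-β) := by gcongr; exact le_max_right _ _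

lemma PowerDecay.mono (h1 : ∀ u, h u ≤ 1) {γ γ' : ℝ} (hγ' : 0 ≤ γ') (hle : γ' ≤ γ)
    (hd : PowerDecay h γ) : PowerDecay h γ' := by
  obtain ⟨C, hC⟩ := hd
  refine powerDecay_of_forall_ge h1 hγ' one_pos (C := |C|) fun u hu => ?_
  calc h u ≤ C * u ^ (-γ) := hC u (by linarith)
    _ ≤ |C| * u ^ (-γ) := by gcongr; exact le_abs_self C
    _ ≤ |C| * u ^ (-γ') := by gcongr

lemma forall_ge_of_forall_Icc_of_sq {P : ℝ → Prop} {S : ℝ} (hS : 1 < S)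
    (hbase : ∀ s ∈ Set.Icc S (S ^ 2), P s) (hstep : ∀ x, S ≤ x → P x → P (x ^ 2)) :
    ∀ s, S ≤ s → P s := by
  have hS0 : 0 ≤ S := by linarith
  have key : ∀ n : ℕ, ∀ s, S ≤ s → s ≤ S ^ 2 ^ n → P s := by
    intro n
    induction n with
    | zero => exact fun s hs hs' => hbase s ⟨hs, hs'.trans (by rw [pow_zero, pow_one]; nlinarith)⟩
    | succ n ih =>
      intro s hs hs'
      rcases le_or_gt s (S ^ 2) with hsS | hsS
      · exact hbase s ⟨hs, hsS⟩
      · have hs0 : 0 ≤ s := by linarith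
        rw [← Real.sq_sqrt hs0]
        refine hstep _ (Real.le_sqrt_of_sq_le hsS.le) (ih _ (Real.le_sqrt_of_sq_le hsS.le) ?_)
        rw [Real.sqrt_le_left (by positivity)]
        rwa [pow_succ, pow_mul] at hs'
  intro s hs
  obtain ⟨n, hn⟩ := pow_unbounded_of_one_lt s hS
  exact key n s hs (hn.le.trans (pow_le_pow_right₀ hS.le (Nat.lt_two_pow_self).le))

lemma exists_pos_lt_rpow_lt {x b c : ℝ} (hx : 0 < x) (hb : 0 < b) (hc : 1 < c) :
    ∃ β, 0 < β ∧ β < b ∧ x ^ β < c := by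
  have hcont : Tendsto (fun β : ℝ => x ^ β) (𝓝 0) (𝓝 1) := by
    simpa using (Real.continuousAt_const_rpow hx.ne' (b := 0)).tendsto
  obtain ⟨β, ⟨hβx, hβb⟩, hβ⟩ := (((hcont.eventually (gt_mem_nhds hc)).and
    (gt_mem_nhds hb)).filter_mono nhdsWithin_le_nhds |>.and
      (self_mem_nhdsWithin (s := Set.Ioi 0))).exists
  exact ⟨β, hβ, hβb, hβx⟩

lemma exists_powerDecay_of_sq_recursion {lam K : ℝ} (hlam : 0 < lam) (h0 : ∀ s, 0 ≤ h s)
    (h1 : ∀ s, h s ≤ 1) (hlim : Tendsto h atTop (𝓝 0))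
    (hrec : ∀ s c, 0 ≤ s → 0 < c → c ≤ 1 → h s ≤ 2 * h (s * c) ^ 2 + K * c ^ lam) :
    ∃ β > 0, PowerDecay h β := by
  -- Invariant `h s ≤ s ^ (-β) / 4` for `s ≥ S`: on `[S, S ^ 2]` it follows from `h ≤ 1 / 16` and
  -- `(S ^ 2) ^ β < 4`; it passes from `x` to `x ^ 2` since `8 K ≤ x ^ (lam / 2)` and `β < lam / 4`.
  obtain ⟨S, hS⟩ := ((hlim.eventually (ge_mem_nhds (by norm_num : (0 : ℝ) < 1 / 16))).and
    (((tendsto_rpow_atTop (half_pos hlam)).eventually_ge_atTop (8 * K)).and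
      (eventually_gt_atTop 1))).exists_forall_of_atTop
  have hS1 : 1 < S := (hS S le_rfl).2.2
  have hS0 : 0 < S := by linarith
  obtain ⟨β, hβ, hβlam, hβS⟩ := exists_pos_lt_rpow_lt (by positivity : 0 < S ^ 2)
    (by positivity : 0 < lam / 4) (by norm_num : (1 : ℝ) < 4)
  have hsq : ∀ x, 1 ≤ x → h (x ^ 2) ≤ 2 * h x ^ 2 + K * x ^ (-lam) := by
    intro x hx
    have hx0 : 0 < x := by linarith
    have := hrec (x ^ 2) x⁻¹ (by positivity) (inv_pos.2 hx0) (inv_le_one_of_one_le₀ hx)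
    rwa [sq, mul_assoc, mul_inv_cancel₀ hx0.ne', mul_one, Real.inv_rpow hx0.le,
      ← Real.rpow_neg hx0.le, ← sq] at this
  have hdecay : ∀ s, S ≤ s → h s ≤ s ^ (-β) / 4 := by
    refine forall_ge_of_forall_Icc_of_sq hS1 (fun s ⟨hSs, hsS⟩ => ?_) (fun x hSx hx => ?_)
    · have hs0 : 0 < s := by linarith
      have : s ^ β ≤ 4 := (Real.rpow_le_rpow hs0.le hsS hβ.le).trans hβS.le
      calc h s ≤ 1 / 16 := (hS s hSs).1
        _ ≤ s ^ (-β) / 4 := by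
          rw [Real.rpow_neg hs0.le, div_le_div_iff₀ (by norm_num) (by norm_num),
            le_inv_mul_iff₀ (by positivity)]
          linarith
    · have hx1 : 1 ≤ x := by linarith
      have hx0 : 0 < x := by linarith
      have hx2 : (x ^ 2) ^ (-β) = x ^ (-β) * x ^ (-β) := by
        rw [← Real.rpow_natCast_mul hx0.le, ← Real.rpow_add hx0]; ring_nf
      have hK : K * x ^ (-lam) ≤ x ^ (-β) * x ^ (-β) / 8 := calc
        K * x ^ (-lam) ≤ x ^ (lam / 2) / 8 * x ^ (-lam) := by
          gcongr; linarith [(hS x hSx).2.1]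
        _ = x ^ (-(lam / 2)) / 8 := by
          rw [div_mul_eq_mul_div, ← Real.rpow_add hx0]; ring_nf
        _ ≤ x ^ (-β + -β) / 8 := by gcongr; linarith
        _ = x ^ (-β) * x ^ (-β) / 8 := by rw [Real.rpow_add hx0]
      calc h (x ^ 2) ≤ 2 * h x ^ 2 + K * x ^ (-lam) := hsq x hx1
        _ ≤ 2 * (x ^ (-β) / 4) ^ 2 + x ^ (-β) * x ^ (-β) / 8 := by gcongr; exact h0 x
        _ = (x ^ 2) ^ (-β) / 4 := by rw [hx2]; ring
  exact ⟨β, hβ, powerDecay_of_forall_ge h1 hβ.le hS0 (C := 1) fun u hu =>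
    (hdecay u hu).trans (by linarith [Real.rpow_nonneg (hS0.le.trans hu) (-β)])⟩

lemma powerDecay_of_bootstrap {lam a β : ℝ} (hlam : 0 < lam) (ha : 1 < a) (h1 : ∀ u, h u ≤ 1)
    (hboot : ∀ γ, 0 < γ → γ ≤ lam → PowerDecay h γ → PowerDecay h (a * γ))
    (hβ : 0 < β) (hdβ : PowerDecay h β) : PowerDecay h (a * lam) := by
  have ha0 : 0 < a := by linarith
  have hiter : ∀ n : ℕ, PowerDecay h (min lam (a ^ n * β)) := by
    intro n
    induction n with
    | zero => exact hdβ.mono h1 (by positivity) (by simp)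
    | succ n ih =>
      refine (hboot _ (by positivity) (min_le_left _ _) ih).mono h1 (by positivity) ?_
      rw [mul_min_of_nonneg _ _ ha0.le, pow_succ', mul_assoc]
      exact min_le_min_right _ (le_mul_of_one_le_left hlam.le ha.le)
  obtain ⟨n, hn⟩ := pow_unbounded_of_one_lt (lam / β) ha
  have hmin : min lam (a ^ n * β) = lam := min_eq_left ((div_le_iff₀ hβ).1 hn.le)
  exact hboot lam hlam le_rfl (hmin ▸ hiter n)

end PowerDecay

section NegativeMoments

variable {Ω : Type*} [MeasurableSpace Ω] {μ : Measure Ω} {f : Ω → ℝ} {lam : ℝ}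

lemma ae_pos_of_lintegral_rpow_neg_lt_top (hf : AEMeasurable f μ) (hlam : 0 < lam)
    (hfin : ∫⁻ ω, ENNReal.ofReal (f ω) ^ (-lam) ∂μ < ⊤) : ∀ᵐ ω ∂μ, 0 < f ω := by
  filter_upwards [ae_lt_top' (hf.ennreal_ofReal.pow_const _) hfin.ne] with ω hω
  by_contra hle
  rw [ENNReal.ofReal_eq_zero.2 (not_lt.1 hle), ENNReal.zero_rpow_of_neg (by linarith)] at hω
  exact lt_irrefl _ hω

lemma integrable_rpow_neg_of_lintegral_lt_top (hf : AEMeasurable f μ) (hf0 : 0 ≤ᵐ[μ] f)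
    (hfin : ∫⁻ ω, ENNReal.ofReal (f ω) ^ (-lam) ∂μ < ⊤) :
    Integrable (fun ω => f ω ^ (-lam)) μ := by
  refine (integrable_toReal_of_lintegral_ne_top (hf.ennreal_ofReal.pow_const _) hfin.ne).congr ?_
  filter_upwards [hf0] with ω hω
  rw [← ENNReal.toReal_rpow, ENNReal.toReal_ofReal hω]

lemma measureReal_le_le_rpow_mul_lintegral (hf : AEMeasurable f μ) (hlam : 0 < lam)
    (hfin : ∫⁻ ω, ENNReal.ofReal (f ω) ^ (-lam) ∂μ < ⊤) {c : ℝ} (hc : 0 < c) :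
    μ.real {ω | f ω ≤ c} ≤ c ^ lam * (∫⁻ ω, ENNReal.ofReal (f ω) ^ (-lam) ∂μ).toReal := by
  have hc0 : ENNReal.ofReal c ^ (-lam) ≠ 0 := by simp [ENNReal.rpow_eq_zero_iff, hc.not_ge]
  have hctop : ENNReal.ofReal c ^ (-lam) ≠ ⊤ := by simp [ENNReal.rpow_eq_top_iff, hc.not_ge]
  have hmarkov : μ {ω | f ω ≤ c} ≤ ENNReal.ofReal (c ^ lam) *
      ∫⁻ ω, ENNReal.ofReal (f ω) ^ (-lam) ∂μ := calc
    μ {ω | f ω ≤ c} ≤ μ {ω | ENNReal.ofReal c ^ (-lam) ≤ ENNReal.ofReal (f ω) ^ (-lam)} :=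
      measure_mono fun ω (hω : f ω ≤ c) => by
        show ENNReal.ofReal c ^ (-lam) ≤ ENNReal.ofReal (f ω) ^ (-lam)
        rw [ENNReal.rpow_neg, ENNReal.rpow_neg]
        gcongr
    _ ≤ (∫⁻ ω, ENNReal.ofReal (f ω) ^ (-lam) ∂μ) / ENNReal.ofReal c ^ (-lam) :=
      meas_ge_le_lintegral_div (hf.ennreal_ofReal.pow_const _) hc0 hctop
    _ = ENNReal.ofReal (c ^ lam) * ∫⁻ ω, ENNReal.ofReal (f ω) ^ (-lam) ∂μ := by
      rw [div_eq_mul_inv, mul_comm, ENNReal.rpow_neg, inv_inv, ENNReal.ofReal_rpow_of_pos hc]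
  calc μ.real {ω | f ω ≤ c}
      ≤ (ENNReal.ofReal (c ^ lam) * ∫⁻ ω, ENNReal.ofReal (f ω) ^ (-lam) ∂μ).toReal :=
        ENNReal.toReal_mono (ENNReal.mul_ne_top ENNReal.ofReal_ne_top hfin.ne) hmarkov
    _ = c ^ lam * (∫⁻ ω, ENNReal.ofReal (f ω) ^ (-lam) ∂μ).toReal := by
      rw [ENNReal.toReal_mul, ENNReal.toReal_ofReal (by positivity)]

lemma tendsto_measure_lt_atTop_zero [IsFiniteMeasure μ] (hf : Measurable f) :
    Tendsto (fun R : ℝ => μ {ω | R < f ω}) atTop (𝓝 0) := by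
  have hempty : ⋂ R : ℝ, {ω | R < f ω} = ∅ :=
    Set.eq_empty_of_forall_notMem fun ω hω => lt_irrefl (f ω) (Set.mem_iInter.1 hω (f ω))
  simpa [hempty, Function.comp_def] using tendsto_measure_iInter_atTop
    (fun R => (measurableSet_lt measurable_const hf).nullMeasurableSet)
    (fun R R' hRR' ω (hω : R' < f ω) => (lt_of_le_of_lt hRR' hω : R < f ω))
    ⟨0, measure_ne_top μ _⟩

lemma exists_div_two_pow_lt_le {v x₀ : ℝ} (hv : 0 < v) (hvx : v ≤ x₀) :
    ∃ n : ℕ, x₀ / 2 ^ (n + 1) < v ∧ v ≤ x₀ / 2 ^ n := by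
  obtain ⟨n, hn, hn'⟩ := exists_nat_pow_near ((one_le_div hv).2 hvx) one_lt_two
  rw [le_div_iff₀ hv] at hn
  rw [div_lt_iff₀ hv] at hn'
  exact ⟨n, by rw [div_lt_iff₀ (by positivity)]; linarith,
    by rw [le_div_iff₀ (by positivity)]; linarith⟩

lemma div_two_pow_succ_rpow_neg_mul {x₀ : ℝ} (hx₀ : 0 < x₀) (α β : ℝ) (n : ℕ) :
    (x₀ / 2 ^ (n + 1)) ^ (-α) * (x₀ / 2 ^ n) ^ β = 2 ^ α * x₀ ^ (β - α) * (2 ^ (α - β)) ^ n := by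
  refine Real.log_injOn_pos (Set.mem_Ioi.2 (by positivity)) (Set.mem_Ioi.2 (by positivity)) ?_
  simp (disch := positivity) only [Real.log_mul, Real.log_rpow, Real.log_div, Real.log_pow]
  push_cast
  ring

lemma lintegral_rpow_neg_le_dyadic (hf : Measurable f) (hpos : ∀ᵐ ω ∂μ, 0 < f ω) {α x₀ : ℝ}
    (hα : 0 ≤ α) (hx₀ : 0 < x₀) :
    ∫⁻ ω, ENNReal.ofReal (f ω ^ (-α)) ∂μ ≤ ENNReal.ofReal (x₀ ^ (-α)) * μ Set.univ +
      ∑' n : ℕ, ENNReal.ofReal ((x₀ / 2 ^ (n + 1)) ^ (-α)) * μ {ω | f ω ≤ x₀ / 2 ^ n} := by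
  have hE : ∀ n : ℕ, MeasurableSet {ω | f ω ≤ x₀ / 2 ^ n} :=
    fun n => measurableSet_le hf measurable_const
  calc ∫⁻ ω, ENNReal.ofReal (f ω ^ (-α)) ∂μ
      ≤ ∫⁻ ω, (ENNReal.ofReal (x₀ ^ (-α)) + ∑' n : ℕ, {ω | f ω ≤ x₀ / 2 ^ n}.indicator
          (fun _ => ENNReal.ofReal ((x₀ / 2 ^ (n + 1)) ^ (-α))) ω) ∂μ := by
        refine lintegral_mono_ae (hpos.mono fun ω hω => ?_)
        rcases lt_or_ge x₀ (f ω) with hbig | hle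
        · exact le_add_right <| ENNReal.ofReal_le_ofReal <|
            Real.rpow_le_rpow_of_nonpos hx₀ hbig.le (neg_nonpos.2 hα)
        · obtain ⟨n, hout, hin⟩ := exists_div_two_pow_lt_le hω hle
          refine le_add_left ((ENNReal.le_tsum n).trans' ?_)
          rw [Set.indicator_of_mem (show ω ∈ {ω | f ω ≤ x₀ / 2 ^ n} from hin)]
          exact ENNReal.ofReal_le_ofReal <|
            Real.rpow_le_rpow_of_nonpos (by positivity) hout.le (neg_nonpos.2 hα)
    _ = _ := by
      rw [lintegral_add_left measurable_const, lintegral_const,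
        lintegral_tsum fun n => (measurable_const.indicator (hE n)).aemeasurable]
      simp_rw [lintegral_indicator_const (hE _)]

lemma lintegral_rpow_neg_lt_top_of_measureReal_le_le [IsFiniteMeasure μ] (hf : Measurable f)
    (hpos : ∀ᵐ ω ∂μ, 0 < f ω) {α β C x₀ : ℝ} (hα : 0 < α) (hαβ : α < β) (hx₀ : 0 < x₀)
    (hsmall : ∀ x, 0 < x → x ≤ x₀ → μ.real {ω | f ω ≤ x} ≤ C * x ^ β) :
    ∫⁻ ω, ENNReal.ofReal (f ω ^ (-α)) ∂μ < ⊤ := by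
  have hterm : ∀ n : ℕ, ENNReal.ofReal ((x₀ / 2 ^ (n + 1)) ^ (-α)) * μ {ω | f ω ≤ x₀ / 2 ^ n} ≤
      ENNReal.ofReal (C * 2 ^ α * x₀ ^ (β - α)) * ENNReal.ofReal (2 ^ (α - β)) ^ n := fun n => by
    have hball : μ {ω | f ω ≤ x₀ / 2 ^ n} ≤ ENNReal.ofReal (C * (x₀ / 2 ^ n) ^ β) := by
      rw [← ofReal_measureReal]
      exact ENNReal.ofReal_le_ofReal <| hsmall _ (by positivity) <|
        div_le_self hx₀.le (one_le_pow₀ one_le_two)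
    calc ENNReal.ofReal ((x₀ / 2 ^ (n + 1)) ^ (-α)) * μ {ω | f ω ≤ x₀ / 2 ^ n}
        ≤ ENNReal.ofReal ((x₀ / 2 ^ (n + 1)) ^ (-α)) *
          ENNReal.ofReal (C * (x₀ / 2 ^ n) ^ β) := by gcongr
      _ = _ := by
        rw [← ENNReal.ofReal_mul (by positivity), mul_left_comm, div_two_pow_succ_rpow_neg_mul hx₀,
          ← ENNReal.ofReal_pow (by positivity), ← ENNReal.ofReal_mul' (by positivity)]
        ring_nf
  have hq : ENNReal.ofReal (2 ^ (α - β)) < 1 :=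
    ENNReal.ofReal_lt_one.2 (Real.rpow_lt_one_of_one_lt_of_neg one_lt_two (by linarith))
  refine (lintegral_rpow_neg_le_dyadic hf hpos hα.le hx₀).trans_lt ?_
  refine (add_le_add le_rfl (ENNReal.tsum_le_tsum hterm)).trans_lt ?_
  rw [ENNReal.tsum_mul_left, ENNReal.tsum_geometric]
  exact ENNReal.add_lt_top.2 ⟨ENNReal.mul_lt_top ENNReal.ofReal_lt_top (measure_lt_top _ _),
    ENNReal.mul_lt_top ENNReal.ofReal_lt_top (ENNReal.inv_lt_top.2 (tsub_pos_of_lt hq))⟩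

end NegativeMoments

section FixedPointInequality

variable {Ω : Type*} {h : ℝ → ℝ} {M : ℕ → Ω → ℝ} {m : ℕ}

lemma prod_le_single_of_le_one {ι : Type*} {t : Finset ι} {g : ι → ℝ} (g0 : ∀ i, 0 ≤ g i)
    (g1 : ∀ i, g i ≤ 1) {k : ι} (hk : k ∈ t) : ∏ i ∈ t, g i ≤ g k := by
  simpa using prod_le_prod_of_subset_of_le_one (singleton_subset_iff.2 hk)
    (fun i _ => g0 i) fun i _ _ => g1 i

lemma prod_le_sq_add_indicator (hanti : Antitone h) (h0 : ∀ s, 0 ≤ h s) (h1 : ∀ s, h s ≤ 1)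
    (hM0 : ∀ k ω, 0 ≤ M k ω) (hm : 1 ≤ m) {s c R : ℝ} (hs : 0 ≤ s) (hR : 1 ≤ R) (ω : Ω) :
    ∏ k ∈ Icc 1 m, h (s * M k ω) ≤ h (s * c) ^ 2 +
      ({ω | ∏ k ∈ Icc 1 m, M k ω ≤ R * c ^ (m - 1)}.indicator 1 ω +
        ({ω | R < M 1 ω}.indicator (fun _ => h s) ω + {ω | M 1 ω ≤ c}.indicator 1 ω)) := by
  have hP0 : 0 ≤ ∏ k ∈ Ioc 1 m, h (s * M k ω) := prod_nonneg fun k _ => h0 _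
  have hP1 : ∏ k ∈ Ioc 1 m, h (s * M k ω) ≤ 1 := prod_le_one (fun k _ => h0 _) fun k _ => h1 _
  have hI1 : 0 ≤ {ω | ∏ k ∈ Icc 1 m, M k ω ≤ R * c ^ (m - 1)}.indicator (1 : Ω → ℝ) ω :=
    Set.indicator_nonneg (fun _ _ => zero_le_one) ω
  have hI2 : 0 ≤ {ω | R < M 1 ω}.indicator (fun _ => h s) ω :=
    Set.indicator_nonneg (fun _ _ => h0 s) ω
  have hI3 : 0 ≤ {ω | M 1 ω ≤ c}.indicator (1 : Ω → ℝ) ω :=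
    Set.indicator_nonneg (fun _ _ => zero_le_one) ω
  have hsq := sq_nonneg (h (s * c))
  rw [← mul_prod_Ioc_eq_prod_Icc hm]
  rcases le_or_gt (M 1 ω) c with hM1c | hM1c
  · rw [Set.indicator_of_mem (show ω ∈ {ω | M 1 ω ≤ c} from hM1c), Pi.one_apply]
    nlinarith [h0 (s * M 1 ω), h1 (s * M 1 ω)]
  by_cases hbig : ∃ k ∈ Ioc 1 m, c ≤ M k ω
  · obtain ⟨k, hk, hck⟩ := hbig
    have hk' : ∏ k ∈ Ioc 1 m, h (s * M k ω) ≤ h (s * c) :=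
      (prod_le_single_of_le_one (fun _ => h0 _) (fun _ => h1 _) hk).trans
        (hanti (mul_le_mul_of_nonneg_left hck hs))
    have h1' : h (s * M 1 ω) ≤ h (s * c) := hanti (mul_le_mul_of_nonneg_left hM1c.le hs)
    nlinarith [h0 (s * M 1 ω)]
  simp only [not_exists, not_and, not_le] at hbig
  by_cases hRM : R < M 1 ω
  · rw [Set.indicator_of_mem (show ω ∈ {ω | R < M 1 ω} from hRM)]
    have : h (s * M 1 ω) ≤ h s := hanti (le_mul_of_one_le_right hs (by linarith))
    nlinarith [h0 (s * M 1 ω)]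
  · have hD : ∏ k ∈ Icc 1 m, M k ω ≤ R * c ^ (m - 1) := by
      rw [← mul_prod_Ioc_eq_prod_Icc hm, ← Nat.card_Ioc 1 m, ← prod_const]
      exact mul_le_mul (not_lt.1 hRM) (prod_le_prod (fun k _ => hM0 k ω)
        fun k hk => (hbig k hk).le) (prod_nonneg fun k _ => hM0 k ω) (by linarith)
    rw [Set.indicator_of_mem (show ω ∈ {ω | ∏ k ∈ Icc 1 m, M k ω ≤ R * c ^ (m - 1)} from hD),
      Pi.one_apply]
    nlinarith [h0 (s * M 1 ω), h1 (s * M 1 ω)]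

variable [MeasurableSpace Ω] {μ : Measure Ω} [IsProbabilityMeasure μ] {lam : ℝ}

lemma integral_prod_le_sq_add_measureReal (hanti : Antitone h) (h0 : ∀ s, 0 ≤ h s)
    (h1 : ∀ s, h s ≤ 1) (hM : ∀ k, Measurable (M k)) (hM0 : ∀ k ω, 0 ≤ M k ω) (hm : 1 ≤ m)
    {s c R : ℝ} (hs : 0 ≤ s) (hR : 1 ≤ R) :
    ∫ ω, ∏ k ∈ Icc 1 m, h (s * M k ω) ∂μ ≤ h (s * c) ^ 2 +
      (μ.real {ω | ∏ k ∈ Icc 1 m, M k ω ≤ R * c ^ (m - 1)} +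
        (μ.real {ω | R < M 1 ω} * h s + μ.real {ω | M 1 ω ≤ c})) := by
  set E₁ := {ω | ∏ k ∈ Icc 1 m, M k ω ≤ R * c ^ (m - 1)}
  set E₂ := {ω | R < M 1 ω}
  set E₃ := {ω | M 1 ω ≤ c}
  have hE₁ : MeasurableSet E₁ :=
    measurableSet_le (Finset.measurable_prod _ fun k _ => hM k) measurable_const
  have hE₂ : MeasurableSet E₂ := measurableSet_lt measurable_const (hM 1)
  have hE₃ : MeasurableSet E₃ := measurableSet_le (hM 1) measurable_const
  have hi₁ : Integrable (E₁.indicator (1 : Ω → ℝ)) μ := (integrable_const 1).indicator hE₁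
  have hi₂ : Integrable (E₂.indicator fun _ => h s) μ := (integrable_const _).indicator hE₂
  have hi₃ : Integrable (E₃.indicator (1 : Ω → ℝ)) μ := (integrable_const 1).indicator hE₃
  have hi₂₃ : Integrable (fun ω => E₂.indicator (fun _ => h s) ω + E₃.indicator 1 ω) μ :=
    hi₂.add hi₃
  have hi₁₂₃ : Integrable (fun ω => E₁.indicator 1 ω +
      (E₂.indicator (fun _ => h s) ω + E₃.indicator 1 ω)) μ := hi₁.add hi₂₃
  calc ∫ ω, ∏ k ∈ Icc 1 m, h (s * M k ω) ∂μ
      ≤ ∫ ω, (h (s * c) ^ 2 + (E₁.indicator 1 ω +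
          (E₂.indicator (fun _ => h s) ω + E₃.indicator 1 ω))) ∂μ :=
      integral_mono_of_nonneg (ae_of_all _ fun ω => prod_nonneg fun k _ => h0 _)
        ((integrable_const _).add hi₁₂₃)
        (ae_of_all _ (prod_le_sq_add_indicator hanti h0 h1 hM0 hm hs hR))
    _ = h (s * c) ^ 2 + (μ.real E₁ + (μ.real E₂ * h s + μ.real E₃)) := by
      rw [integral_add (integrable_const _) hi₁₂₃, integral_add hi₁ hi₂₃, integral_add hi₂ hi₃,
        integral_const, integral_indicator_one hE₁, integral_indicator_const _ hE₂,
        integral_indicator_one hE₃]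
      simp

lemma exists_sq_recursion (hanti : Antitone h) (h0 : ∀ s, 0 ≤ h s) (h1 : ∀ s, h s ≤ 1)
    (hM : ∀ k, Measurable (M k)) (hM0 : ∀ k ω, 0 ≤ M k ω) (hm : 2 ≤ m)
    (hlam : 0 < lam) (hrec : ∀ s, 0 ≤ s → h s ≤ ∫ ω, ∏ k ∈ Icc 1 m, h (s * M k ω) ∂μ)
    (hM1 : ∫⁻ ω, ENNReal.ofReal (M 1 ω) ^ (-lam) ∂μ < ⊤)
    (hD : ∫⁻ ω, ENNReal.ofReal (∏ k ∈ Icc 1 m, M k ω) ^ (-lam) ∂μ < ⊤) :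
    ∃ K, ∀ s c, 0 ≤ s → 0 < c → c ≤ 1 → h s ≤ 2 * h (s * c) ^ 2 + K * c ^ lam := by
  -- `P(M_1 > R) ≤ 1/2` lets the term `h s * P(M_1 > R)` be absorbed into the left-hand side
  obtain ⟨R, hRhalf, hR1⟩ := (((tendsto_measure_lt_atTop_zero (μ := μ) (hM 1)).eventually
    (ge_mem_nhds (by norm_num : (0 : ℝ≥0∞) < ENNReal.ofReal (1 / 2)))).and
      (eventually_ge_atTop 1)).exists
  set KM := (∫⁻ ω, ENNReal.ofReal (M 1 ω) ^ (-lam) ∂μ).toReal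
  set KD := (∫⁻ ω, ENNReal.ofReal (∏ k ∈ Icc 1 m, M k ω) ^ (-lam) ∂μ).toReal
  refine ⟨2 * (R ^ lam * KD + KM), fun s c hs hc hc1 => ?_⟩
  have hE₁ : μ.real {ω | ∏ k ∈ Icc 1 m, M k ω ≤ R * c ^ (m - 1)} ≤ R ^ lam * KD * c ^ lam := calc
    _ ≤ (R * c ^ (m - 1)) ^ lam * KD := measureReal_le_le_rpow_mul_lintegral
      (Finset.measurable_prod _ fun k _ => hM k).aemeasurable hlam hD (by positivity)
    _ ≤ (R * c) ^ lam * KD := by gcongr; exact pow_le_of_le_one hc.le hc1 (by omega)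
    _ = R ^ lam * KD * c ^ lam := by rw [Real.mul_rpow (by linarith) hc.le]; ring
  have hE₂ : μ.real {ω | R < M 1 ω} * h s ≤ 1 / 2 * h s :=
    mul_le_mul_of_nonneg_right (ENNReal.toReal_le_of_le_ofReal (by norm_num) hRhalf) (h0 s)
  have hE₃ : μ.real {ω | M 1 ω ≤ c} ≤ c ^ lam * KM :=
    measureReal_le_le_rpow_mul_lintegral (hM 1).aemeasurable hlam hM1 hc
  linarith [hrec s hs, integral_prod_le_sq_add_measureReal (μ := μ) (c := c) hanti h0 h1 hM hM0
    (by omega : 1 ≤ m) hs hR1]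

lemma rpow_neg_le_one_add_rpow_neg {x γ lam : ℝ} (hx : 0 < x) (hγ : 0 ≤ γ) (hγlam : γ ≤ lam) :
    x ^ (-γ) ≤ 1 + x ^ (-lam) := by
  rcases le_total 1 x with hx1 | hx1
  · linarith [Real.rpow_le_one_of_one_le_of_nonpos hx1 (neg_nonpos.2 hγ),
      Real.rpow_nonneg hx.le (-lam)]
  · linarith [Real.rpow_le_rpow_of_exponent_ge hx hx1 (neg_le_neg hγlam)]

lemma powerDecay_mul_of_le_integral_prod (h0 : ∀ s, 0 ≤ h s) (hM : ∀ k, Measurable (M k))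
    (hM0 : ∀ k ω, 0 ≤ M k ω) (hlam : 0 < lam)
    (hrec : ∀ s, 0 ≤ s → h s ≤ ∫ ω, ∏ k ∈ Icc 1 m, h (s * M k ω) ∂μ)
    (hD : ∫⁻ ω, ENNReal.ofReal (∏ k ∈ Icc 1 m, M k ω) ^ (-lam) ∂μ < ⊤)
    {γ : ℝ} (hγ : 0 < γ) (hγlam : γ ≤ lam) (hdγ : PowerDecay h γ) : PowerDecay h (m * γ) := by
  obtain ⟨C, hC⟩ := hdγ
  have hC0 : 0 ≤ C := by simpa using (h0 1).trans (hC 1 one_pos)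
  have hD_meas : Measurable fun ω => ∏ k ∈ Icc 1 m, M k ω :=
    Finset.measurable_prod _ fun k _ => hM k
  have hDint := integrable_rpow_neg_of_lintegral_lt_top hD_meas.aemeasurable
    (ae_of_all _ fun ω => prod_nonneg fun k _ => hM0 k ω) hD
  refine ⟨C ^ m * (1 + ∫ ω, (∏ k ∈ Icc 1 m, M k ω) ^ (-lam) ∂μ), fun s hs => ?_⟩
  have hpt : ∀ᵐ ω ∂μ, ∏ k ∈ Icc 1 m, h (s * M k ω) ≤
      C ^ m * s ^ (-(m * γ)) * (1 + (∏ k ∈ Icc 1 m, M k ω) ^ (-lam)) := by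
    filter_upwards [ae_pos_of_lintegral_rpow_neg_lt_top hD_meas.aemeasurable hlam hD] with ω hω
    have hMpos : ∀ k ∈ Icc 1 m, 0 < M k ω := fun k hk =>
      (hM0 k ω).lt_of_ne fun h => hω.ne' (prod_eq_zero hk h.symm)
    calc ∏ k ∈ Icc 1 m, h (s * M k ω) ≤ ∏ k ∈ Icc 1 m, C * (s * M k ω) ^ (-γ) :=
          prod_le_prod (fun k _ => h0 _) fun k hk => hC _ (mul_pos hs (hMpos k hk))
      _ = C ^ m * s ^ (-(m * γ)) * (∏ k ∈ Icc 1 m, M k ω) ^ (-γ) := by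
        rw [prod_mul_distrib, prod_const, Nat.card_Icc, add_tsub_cancel_right,
          Real.finsetProd_rpow _ _ fun k _ => mul_nonneg hs.le (hM0 k ω), prod_mul_distrib,
          prod_const, Nat.card_Icc, add_tsub_cancel_right, Real.mul_rpow (by positivity)
            (prod_nonneg fun k _ => hM0 k ω), ← Real.rpow_natCast_mul hs.le, mul_neg]
        ring
      _ ≤ C ^ m * s ^ (-(m * γ)) * (1 + (∏ k ∈ Icc 1 m, M k ω) ^ (-lam)) := by
        gcongr
        exact rpow_neg_le_one_add_rpow_neg hω hγ.le hγlam
  calc h s ≤ ∫ ω, ∏ k ∈ Icc 1 m, h (s * M k ω) ∂μ := hrec s hs.le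
    _ ≤ ∫ ω, C ^ m * s ^ (-(m * γ)) * (1 + (∏ k ∈ Icc 1 m, M k ω) ^ (-lam)) ∂μ :=
      integral_mono_of_nonneg (ae_of_all _ fun ω => prod_nonneg fun k _ => h0 _)
        (((integrable_const 1).add hDint).const_mul _) hpt
    _ = C ^ m * (1 + ∫ ω, (∏ k ∈ Icc 1 m, M k ω) ^ (-lam) ∂μ) * s ^ (-(m * γ)) := by
      rw [integral_const_mul, integral_add (integrable_const 1) hDint, integral_const]
      simp only [probReal_univ, smul_eq_mul, one_mul]
      ring

lemma powerDecay_of_le_integral_prod (hanti : Antitone h) (h0 : ∀ s, 0 ≤ h s)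
    (h1 : ∀ s, h s ≤ 1) (hlim : Tendsto h atTop (𝓝 0)) (hM : ∀ k, Measurable (M k))
    (hM0 : ∀ k ω, 0 ≤ M k ω) (hm : 2 ≤ m) (hlam : 0 < lam)
    (hrec : ∀ s, 0 ≤ s → h s ≤ ∫ ω, ∏ k ∈ Icc 1 m, h (s * M k ω) ∂μ)
    (hM1 : ∫⁻ ω, ENNReal.ofReal (M 1 ω) ^ (-lam) ∂μ < ⊤)
    (hprod : ∫⁻ ω, ∏ k ∈ Icc 1 m, ENNReal.ofReal (M k ω) ^ (-lam) ∂μ < ⊤) :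
    PowerDecay h (m * lam) := by
  have hD : ∫⁻ ω, ENNReal.ofReal (∏ k ∈ Icc 1 m, M k ω) ^ (-lam) ∂μ < ⊤ := by
    simpa only [ENNReal.ofReal_prod_of_nonneg fun k _ => hM0 k _,
      ENNReal.prod_rpow_of_ne_top fun k _ => ENNReal.ofReal_ne_top] using hprod
  obtain ⟨K, hsq⟩ := exists_sq_recursion hanti h0 h1 hM hM0 hm hlam hrec hM1 hD
  obtain ⟨β, hβ, hdβ⟩ := exists_powerDecay_of_sq_recursion hlam h0 h1 hlim hsq
  exact powerDecay_of_bootstrap hlam (by exact_mod_cast hm) h1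
    (fun γ hγ hγlam => powerDecay_mul_of_le_integral_prod h0 hM hM0 hlam hrec hD hγ hγlam) hβ hdβ

end FixedPointInequality

section FiniteSums

variable {ι : Type*} [Fintype ι]

noncomputable def rowSumMin (a : ι → ι → ℝ) : ℝ := ⨅ i, ∑ j, a i j

lemma sum_mul_iInf_le {t : ι → ℝ} (ht : 0 ≤ t) (x : ι → ℝ) :
    (∑ i, t i) * ⨅ i, x i ≤ ∑ i, t i * x i := by
  rw [sum_mul]
  exact sum_le_sum fun i _ =>
    mul_le_mul_of_nonneg_left (ciInf_le (Finite.bddBelow_range x) i) (ht i)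

lemma sum_mul_rowSumMin_le {t : ι → ℝ} (ht : 0 ≤ t) (a : ι → ι → ℝ) :
    (∑ i, t i) * rowSumMin a ≤ ∑ j, ∑ i, t i * a i j := by
  rw [rowSumMin, sum_comm]
  simpa only [mul_sum] using sum_mul_iInf_le ht fun i => ∑ j, a i j

lemma sum_mul_pos_of_pos {y z : ι → ℝ} (hy : 0 < y) (hz : ∀ j, 0 < z j) :
    0 < ∑ j, y j * z j := by
  obtain ⟨hy0, j, hj⟩ := Pi.lt_def.1 hy
  exact Fintype.sum_pos (Pi.lt_def.2 ⟨fun i => mul_nonneg (hy0 i) (hz i).le, j, mul_pos hj (hz j)⟩)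

lemma rowSumMin_nonneg {a : ι → ι → ℝ} (ha : ∀ i j, 0 ≤ a i j) : 0 ≤ rowSumMin a :=
  Real.iInf_nonneg fun i => sum_nonneg fun j _ => ha i j

lemma Measurable.rowSumMin {Ω : Type*} [MeasurableSpace Ω] {A : Ω → ι → ι → ℝ}
    (hA : Measurable A) : Measurable fun ω => rowSumMin (A ω) :=
  Measurable.iInf fun i => Finset.measurable_sum _ fun j _ =>
    (measurable_pi_apply j).comp ((measurable_pi_apply i).comp hA)

end FiniteSums

section TailSup

variable {ι : Type*} [Fintype ι] {φ : (ι → ℝ) → ℝ}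

noncomputable def tailSup (φ : (ι → ℝ) → ℝ) (s : ℝ) : ℝ :=
  ⨆ t : {t : ι → ℝ // 0 ≤ t ∧ s ≤ ∑ i, t i}, φ t

lemma le_tailSup (hφ1 : ∀ t, 0 ≤ t → φ t ≤ 1) {t : ι → ℝ} (ht : 0 ≤ t) {s : ℝ}
    (hs : s ≤ ∑ i, t i) : φ t ≤ tailSup φ s :=
  le_ciSup (f := fun t : {t : ι → ℝ // 0 ≤ t ∧ s ≤ ∑ i, t i} => φ t)
    ⟨1, Set.forall_mem_range.2 fun t => hφ1 t t.2.1⟩ ⟨t, ht, hs⟩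

lemma tailSup_le {s b : ℝ} (hb : 0 ≤ b) (H : ∀ t, 0 ≤ t → s ≤ ∑ i, t i → φ t ≤ b) :
    tailSup φ s ≤ b :=
  Real.iSup_le (fun t => H t t.2.1 t.2.2) hb

lemma tailSup_nonneg (hφ0 : ∀ t, 0 ≤ t → 0 ≤ φ t) (s : ℝ) : 0 ≤ tailSup φ s :=
  Real.iSup_nonneg fun t => hφ0 t t.2.1

lemma tailSup_le_one (hφ1 : ∀ t, 0 ≤ t → φ t ≤ 1) (s : ℝ) : tailSup φ s ≤ 1 :=
  tailSup_le zero_le_one fun t ht _ => hφ1 t ht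

lemma antitone_tailSup (hφ0 : ∀ t, 0 ≤ t → 0 ≤ φ t) (hφ1 : ∀ t, 0 ≤ t → φ t ≤ 1) :
    Antitone (tailSup φ) := fun _ _ hss' =>
  tailSup_le (tailSup_nonneg hφ0 _) fun _ ht hs't => le_tailSup hφ1 ht (hss'.trans hs't)

lemma tailSup_le_integral_prod {Ω ι : Type*} [MeasurableSpace Ω] {μ : Measure Ω}
    [IsFiniteMeasure μ] [Fintype ι] {φ : (ι → ℝ) → ℝ} (hφ0 : ∀ t, 0 ≤ t → 0 ≤ φ t)
    (hφ1 : ∀ t, 0 ≤ t → φ t ≤ 1) {N : Ω → ℕ} {A : ℕ → Ω → ι → ι → ℝ}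
    (hA0 : ∀ k ω i j, 0 ≤ A k ω i j) (hA : ∀ k, Measurable (A k))
    (hfe : ∀ t : ι → ℝ, 0 ≤ t →
      φ t = ∫ ω, ∏ k ∈ Icc 1 (N ω), φ (fun j => ∑ i, t i * A k ω i j) ∂μ)
    {m : ℕ} (hNm : ∀ᵐ ω ∂μ, m ≤ N ω) (s : ℝ) :
    tailSup φ s ≤ ∫ ω, ∏ k ∈ Icc 1 m, tailSup φ (s * rowSumMin (A k ω)) ∂μ := by
  have hint : Integrable (fun ω => ∏ k ∈ Icc 1 m, tailSup φ (s * rowSumMin (A k ω))) μ := by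
    refine Integrable.of_bound (Finset.measurable_prod _ fun k _ =>
      (antitone_tailSup hφ0 hφ1).measurable.comp
        (measurable_const.mul (hA k).rowSumMin)).aestronglyMeasurable 1 (ae_of_all _ fun ω => ?_)
    rw [Real.norm_of_nonneg (prod_nonneg fun k _ => tailSup_nonneg hφ0 _)]
    exact prod_le_one (fun k _ => tailSup_nonneg hφ0 _) fun k _ => tailSup_le_one hφ1 _
  refine tailSup_le (integral_nonneg fun ω => prod_nonneg fun k _ => tailSup_nonneg hφ0 _)
    fun t ht hst => ?_
  have htA : ∀ k ω, 0 ≤ fun j => ∑ i, t i * A k ω i j := fun k ω j =>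
    sum_nonneg fun i _ => mul_nonneg (ht i) (hA0 k ω i j)
  rw [hfe t ht]
  refine integral_mono_of_nonneg (ae_of_all _ fun ω => prod_nonneg fun k _ => hφ0 _ (htA k ω))
    hint ?_
  filter_upwards [hNm] with ω hω
  calc ∏ k ∈ Icc 1 (N ω), φ (fun j => ∑ i, t i * A k ω i j)
      ≤ ∏ k ∈ Icc 1 m, φ (fun j => ∑ i, t i * A k ω i j) :=
        prod_le_prod_of_subset_of_le_one (Icc_subset_Icc_right hω)
          (fun k _ => hφ0 _ (htA k ω)) fun k _ _ => hφ1 _ (htA k ω)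
    _ ≤ ∏ k ∈ Icc 1 m, tailSup φ (s * rowSumMin (A k ω)) :=
        prod_le_prod (fun k _ => hφ0 _ (htA k ω)) fun k _ => le_tailSup hφ1 (htA k ω) <|
          (mul_le_mul_of_nonneg_right hst (rowSumMin_nonneg (hA0 k ω))).trans
            (sum_mul_rowSumMin_le ht _)

end TailSup

section Laplace

variable {Ω ι : Type*} [MeasurableSpace Ω] {μ : Measure Ω} [Fintype ι] {Z : Ω → ι → ℝ}

noncomputable def laplaceTransform (μ : Measure Ω) (Z : Ω → ι → ℝ) (t : ι → ℝ) : ℝ :=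
  ∫ ω, Real.exp (-∑ j, t j * Z ω j) ∂μ

lemma laplaceTransform_nonneg (t : ι → ℝ) : 0 ≤ laplaceTransform μ Z t :=
  integral_nonneg fun _ => (Real.exp_pos _).le

lemma exp_neg_sum_mul_le_one {t z : ι → ℝ} (ht : 0 ≤ t) (hz : 0 ≤ z) :
    Real.exp (-∑ j, t j * z j) ≤ 1 :=
  Real.exp_le_one_iff.2 (neg_nonpos.2 (sum_nonneg fun j _ => mul_nonneg (ht j) (hz j)))

lemma laplaceTransform_le_one [IsProbabilityMeasure μ] (hZ0 : ∀ᵐ ω ∂μ, 0 ≤ Z ω) {t : ι → ℝ}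
    (ht : 0 ≤ t) : laplaceTransform μ Z t ≤ 1 := by
  simpa [laplaceTransform] using integral_mono_of_nonneg (ae_of_all _ fun ω => (Real.exp_pos _).le)
    (integrable_const (1 : ℝ)) (hZ0.mono fun ω hω => exp_neg_sum_mul_le_one ht hω)

lemma integrable_exp_neg_sum_mul [IsFiniteMeasure μ] (hZ : Measurable Z)
    (hZ0 : ∀ᵐ ω ∂μ, 0 ≤ Z ω) {t : ι → ℝ} (ht : 0 ≤ t) :
    Integrable (fun ω => Real.exp (-∑ j, t j * Z ω j)) μ :=
  Integrable.of_bound (by fun_prop) 1 <| hZ0.mono fun ω hω => by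
    rw [Real.norm_of_nonneg (Real.exp_pos _).le]
    exact exp_neg_sum_mul_le_one ht hω

lemma tendsto_tailSup_laplaceTransform [IsProbabilityMeasure μ] [Nonempty ι] (hZ : Measurable Z)
    (hZpos : ∀ᵐ ω ∂μ, ∀ j, 0 < Z ω j) :
    Tendsto (tailSup (laplaceTransform μ Z)) atTop (𝓝 0) := by
  set Zmin : Ω → ℝ := fun ω => ⨅ j, Z ω j
  have hZmin : Measurable Zmin := Measurable.iInf fun j => (measurable_pi_apply j).comp hZ
  have hZmin_pos : ∀ᵐ ω ∂μ, 0 < Zmin ω := hZpos.mono fun ω hω => by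
    simpa only [Zmin, ← Finset.inf'_univ_eq_ciInf, Finset.lt_inf'_iff] using fun j _ => hω j
  have hZ0 : ∀ᵐ ω ∂μ, 0 ≤ Z ω := hZpos.mono fun ω hω j => (hω j).le
  have hexp_le : ∀ s : ℝ, 0 ≤ s → ∀ᵐ ω ∂μ, ‖Real.exp (-(s * Zmin ω))‖ ≤ 1 := fun s hs =>
    hZmin_pos.mono fun ω hω => by
      rw [Real.norm_of_nonneg (Real.exp_pos _).le, Real.exp_le_one_iff, neg_nonpos]
      positivity
  have hG : Tendsto (fun s => ∫ ω, Real.exp (-(s * Zmin ω)) ∂μ) atTop (𝓝 0) := by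
    simpa using tendsto_integral_filter_of_dominated_convergence (fun _ => (1 : ℝ))
      (Eventually.of_forall fun s => by fun_prop) ((eventually_ge_atTop 0).mono hexp_le)
      (integrable_const 1) (hZmin_pos.mono fun ω hω => Real.tendsto_exp_atBot.comp
        (tendsto_neg_atTop_atBot.comp (tendsto_id.atTop_mul_const hω)))
  refine tendsto_of_tendsto_of_tendsto_of_le_of_le' tendsto_const_nhds hG
    (Eventually.of_forall (tailSup_nonneg fun t _ => laplaceTransform_nonneg t))
    ((eventually_ge_atTop 0).mono fun s hs => tailSup_le (integral_nonneg fun _ => ?_)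
      fun t ht hst => integral_mono_of_nonneg (ae_of_all _ fun _ => (Real.exp_pos _).le)
        (Integrable.of_bound (by fun_prop) 1 (hexp_le s hs)) ?_)
  · exact (Real.exp_pos _).le
  · filter_upwards [hZmin_pos] with ω hω
    exact Real.exp_le_exp.2 <| neg_le_neg <|
      (mul_le_mul_of_nonneg_right hst hω.le).trans (sum_mul_iInf_le ht (Z ω))

lemma measureReal_le_le_exp_mul_laplaceTransform [IsFiniteMeasure μ] (hZ : Measurable Z)
    (hZ0 : ∀ᵐ ω ∂μ, 0 ≤ Z ω) {y : ι → ℝ} (hy : 0 ≤ y) {x : ℝ} (hx : 0 < x) :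
    μ.real {ω | ∑ j, y j * Z ω j ≤ x} ≤ Real.exp 1 * laplaceTransform μ Z (fun j => y j / x) := by
  have hexp : ∀ ω, -x⁻¹ * ∑ j, y j * Z ω j = -∑ j, y j / x * Z ω j := fun ω => by
    rw [neg_mul, mul_sum]; simp only [div_eq_inv_mul, mul_assoc]
  have hint : Integrable (fun ω => Real.exp (-x⁻¹ * ∑ j, y j * Z ω j)) μ := by
    simpa only [hexp] using integrable_exp_neg_sum_mul hZ hZ0 fun j => div_nonneg (hy j) hx.le
  simpa only [mgf, hexp, neg_neg, inv_mul_cancel₀ hx.ne', laplaceTransform] using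
    measure_le_le_exp_mul_mgf x (neg_nonpos.2 (inv_nonneg.2 hx.le)) hint

lemma measureReal_le_le_rpow_of_laplaceTransform_le [IsFiniteMeasure μ] (hZ : Measurable Z)
    (hZ0 : ∀ᵐ ω ∂μ, 0 ≤ Z ω) {C a : ℝ}
    (hdecay : ∀ t, 0 ≤ t → 1 ≤ ∑ j, t j → laplaceTransform μ Z t ≤ C * (∑ j, t j) ^ (-a))
    {y : ι → ℝ} (hy : 0 ≤ y) {x : ℝ} (hx : 0 < x) (hxy : x ≤ ∑ j, y j) :
    μ.real {ω | ∑ j, y j * Z ω j ≤ x} ≤ Real.exp 1 * C * (∑ j, y j) ^ (-a) * x ^ a := by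
  have hsum : ∑ j, y j / x = (∑ j, y j) / x := (sum_div _ _ _).symm
  calc μ.real {ω | ∑ j, y j * Z ω j ≤ x}
      ≤ Real.exp 1 * laplaceTransform μ Z (fun j => y j / x) :=
        measureReal_le_le_exp_mul_laplaceTransform hZ hZ0 hy hx
    _ ≤ Real.exp 1 * (C * ((∑ j, y j) / x) ^ (-a)) := by
      rw [← hsum]
      gcongr
      exact hdecay _ (fun j => div_nonneg (hy j) hx.le) (by rw [hsum, one_le_div hx]; exact hxy)
    _ = Real.exp 1 * C * (∑ j, y j) ^ (-a) * x ^ a := by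
      rw [Real.div_rpow (hx.le.trans hxy) hx.le, Real.rpow_neg hx.le, div_inv_eq_mul]; ring

end Laplace

theorem harmonic_moments_second_general
    {Ω : Type*} [MeasurableSpace Ω] (μ : Measure Ω) [IsProbabilityMeasure μ]
    {p : ℕ} (hp : 0 < p)
    (N : Ω → ℕ)
    (A : ℕ → Ω → Fin p → Fin p → ℝ) (hApos : ∀ k ω i j, 0 ≤ A k ω i j)
    (hAmeas : ∀ k, Measurable (A k))
    (Z : Ω → Fin p → ℝ) (hZmeas : Measurable Z)
    (hZpos : ∀ᵐ ω ∂μ, ∀ j, 0 < Z ω j)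
    (φ : (Fin p → ℝ) → ℝ)
    (hφ : ∀ t : Fin p → ℝ, φ t = ∫ ω, Real.exp (-(∑ j, t j * Z ω j)) ∂μ)
    (hfe : ∀ t : Fin p → ℝ, (∀ j, 0 ≤ t j) →
      φ t = ∫ ω, ∏ k ∈ Finset.Icc 1 (N ω), φ (fun j => ∑ i, t i * A k ω i j) ∂μ)
    (lam : ℝ) (hlam : 0 < lam)
    (m : ℕ) (hm : 2 ≤ m) (hNm : ∀ᵐ ω ∂μ, m ≤ N ω)
    (hmom : ∫⁻ ω, (ENNReal.ofReal (⨅ i, ∑ j, A 1 ω i j)) ^ (-lam) ∂μ < ⊤)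
    (hmomprod : ∫⁻ ω, ∏ k ∈ Finset.Icc 1 m,
        (ENNReal.ofReal (⨅ i, ∑ j, A k ω i j)) ^ (-lam) ∂μ < ⊤) :
    (∃ C > 0, ∃ T > 0, ∀ t : Fin p → ℝ, (∀ j, 0 ≤ t j) → T ≤ ∑ j, t j →
      φ t ≤ C * (∑ j, t j) ^ (-((m : ℝ) * lam))) ∧
    (∀ y : Fin p → ℝ, (∀ j, 0 ≤ y j) → y ≠ 0 →
      ∃ C > 0, ∃ x₀ > 0, ∀ x : ℝ, 0 < x → x ≤ x₀ →
        (μ {ω | ∑ j, y j * Z ω j ≤ x}).toReal ≤ C * x ^ ((m : ℝ) * lam)) ∧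
    (∀ y : Fin p → ℝ, (∀ j, 0 ≤ y j) → y ≠ 0 → ∀ lam₁ : ℝ, 0 < lam₁ → lam₁ < lam →
      ∫⁻ ω, ENNReal.ofReal ((∑ j, y j * Z ω j) ^ (-((m : ℝ) * lam₁))) ∂μ < ⊤) := by
  have : Nonempty (Fin p) := ⟨⟨0, hp⟩⟩
  obtain rfl : φ = laplaceTransform μ Z := funext hφ
  have hZ0 : ∀ᵐ ω ∂μ, 0 ≤ Z ω := hZpos.mono fun ω hω j => (hω j).le
  have hφ0 : ∀ t, 0 ≤ t → 0 ≤ laplaceTransform μ Z t := fun t _ => laplaceTransform_nonneg t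
  have hφ1 : ∀ t, 0 ≤ t → laplaceTransform μ Z t ≤ 1 := fun t => laplaceTransform_le_one hZ0
  obtain ⟨C, hC⟩ : PowerDecay (tailSup (laplaceTransform μ Z)) (m * lam) :=
    powerDecay_of_le_integral_prod (antitone_tailSup hφ0 hφ1) (tailSup_nonneg hφ0)
      (tailSup_le_one hφ1) (tendsto_tailSup_laplaceTransform hZmeas hZpos)
      (fun k => (hAmeas k).rowSumMin) (fun k ω => rowSumMin_nonneg (hApos k ω)) hm hlam
      (fun s _ => tailSup_le_integral_prod hφ0 hφ1 hApos hAmeas hfe hNm s) hmom hmomprod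
  have hdecay : ∀ t, 0 ≤ t → 1 ≤ ∑ j, t j →
      laplaceTransform μ Z t ≤ max C 1 * (∑ j, t j) ^ (-((m : ℝ) * lam)) := fun t ht ht1 =>
    (le_tailSup hφ1 ht le_rfl).trans <| (hC _ (by linarith)).trans <| by
      gcongr; exact le_max_left _ _
  have hsmall : ∀ y : Fin p → ℝ, 0 ≤ y → y ≠ 0 → ∃ C > 0, ∃ x₀ > 0, ∀ x : ℝ, 0 < x → x ≤ x₀ →
      μ.real {ω | ∑ j, y j * Z ω j ≤ x} ≤ C * x ^ ((m : ℝ) * lam) := fun y hy hy0 => by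
    have hsum : 0 < ∑ j, y j := Fintype.sum_pos (hy.lt_of_ne' hy0)
    exact ⟨_, by positivity, _, hsum, fun x hx hxy =>
      measureReal_le_le_rpow_of_laplaceTransform_le hZmeas hZ0 hdecay hy hx hxy⟩
  refine ⟨⟨max C 1, by positivity, 1, one_pos, hdecay⟩, hsmall,
    fun y hy hy0 lam₁ hlam₁ hlt => ?_⟩
  obtain ⟨C', -, x₀, hx₀, hC'⟩ := hsmall y hy hy0
  exact lintegral_rpow_neg_lt_top_of_measureReal_le_le (by fun_prop)
    (hZpos.mono fun ω => sum_mul_pos_of_pos (lt_of_le_of_ne hy hy0.symm)) (by positivity)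
    (mul_lt_mul_of_pos_left hlt (by positivity)) hx₀ hC'

/-- **Theorem 2.2 (Harmonic moments), second part.** Let `Z ∈ [0,∞)^p` be an a.s. positive
solution with Laplace transform `φ` satisfying `φ(t) = E ∏_{k=1}^N φ(t A_k)`.  If `m̲ ≥ 2`,
`N ≥ m̲` a.s., `E[(min_i Σ_j (A_1)_{ij})^{-λ}] < ∞` and
`E[∏_{k=1}^{m̲} (min_i Σ_j (A_k)_{ij})^{-λ}] < ∞`, then `φ(t) = O(‖t‖^{-m̲λ})`,
`P(y·Z ≤ x) = O(x^{m̲λ})` and `E[(y·Z)^{-m̲λ₁}] < ∞` for `0 < λ₁ < λ`. -/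
theorem harmonic_moments_second
    {Ω : Type*} [MeasurableSpace Ω] (μ : Measure Ω) [IsProbabilityMeasure μ]
    {p : ℕ} (hp : 0 < p)
    (N : Ω → ℕ) (hN : ∀ ω, 1 ≤ N ω) (hNmeas : Measurable N)
    (A : ℕ → Ω → Fin p → Fin p → ℝ) (hApos : ∀ k ω i j, 0 ≤ A k ω i j)
    (hAmeas : ∀ k, Measurable (A k))
    (Z : Ω → Fin p → ℝ) (hZmeas : Measurable Z)
    (hZpos : ∀ᵐ ω ∂μ, ∀ j, 0 < Z ω j)
    (φ : (Fin p → ℝ) → ℝ)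
    (hφ : ∀ t : Fin p → ℝ, φ t = ∫ ω, Real.exp (-(∑ j, t j * Z ω j)) ∂μ)
    (hfe : ∀ t : Fin p → ℝ, (∀ j, 0 ≤ t j) →
      φ t = ∫ ω, ∏ k ∈ Finset.Icc 1 (N ω), φ (fun j => ∑ i, t i * A k ω i j) ∂μ)
    (lam : ℝ) (hlam : 0 < lam)
    (m : ℕ) (hm : 2 ≤ m) (hNm : ∀ᵐ ω ∂μ, m ≤ N ω)
    (hmom : ∫⁻ ω, (ENNReal.ofReal (⨅ i, ∑ j, A 1 ω i j)) ^ (-lam) ∂μ < ⊤)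
    (hmomprod : ∫⁻ ω, ∏ k ∈ Finset.Icc 1 m,
        (ENNReal.ofReal (⨅ i, ∑ j, A k ω i j)) ^ (-lam) ∂μ < ⊤) :
    (∃ C > 0, ∃ T > 0, ∀ t : Fin p → ℝ, (∀ j, 0 ≤ t j) → T ≤ ∑ j, t j →
      φ t ≤ C * (∑ j, t j) ^ (-((m : ℝ) * lam))) ∧
    (∀ y : Fin p → ℝ, (∀ j, 0 ≤ y j) → y ≠ 0 →
      ∃ C > 0, ∃ x₀ > 0, ∀ x : ℝ, 0 < x → x ≤ x₀ →
        (μ {ω | ∑ j, y j * Z ω j ≤ x}).toReal ≤ C * x ^ ((m : ℝ) * lam)) ∧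
    (∀ y : Fin p → ℝ, (∀ j, 0 ≤ y j) → y ≠ 0 → ∀ lam₁ : ℝ, 0 < lam₁ → lam₁ < lam →
      ∫⁻ ω, ENNReal.ofReal ((∑ j, y j * Z ω j) ^ (-((m : ℝ) * lam₁))) ∂μ < ⊤) :=
  harmonic_moments_second_general μ hp N A hApos hAmeas Z hZmeas hZpos φ hφ hfe lam hlam m hm hNm
    hmom hmomprod
end

section
/- Let p ≥ 1 be an integer, λ > 0, and let φ : [0,∞)^p → [0,∞) be a bounded measurable function. Let A = (a_{ij}) be a p×p random matrix with entries in [0,∞) which is not almost surely the zero matrix. Suppose there exist q ∈ (0,1) and t_ε > 0 such that φ(t) ≤ q·E[φ(t A)] for all t ∈ [0,∞)^p with ‖t‖ > t_ε. If q·E[(min_{1≤i≤p} Σ_{j=1}^p a_{ij})^{−λ}] < 1, then φ(t) = O(‖t‖^{−λ}) as ‖t‖ → ∞; in fact there exists C > 0 such that φ(t) ≤ C ‖t‖^{−λ} for all nonzero t ∈ [0,∞)^p. -/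
/-!
Write `ρ = q E[m^{-λ}] < 1` with `m = min_i Σ_j a_{ij}`, so that `‖tA‖ ≥ ‖t‖ m`. Below the
threshold `t_ε`, boundedness alone gives `φ(t) ≤ K ≤ K t_ε^λ ‖t‖^{-λ}`. If `φ ≤ a + B ‖·‖^{-λ}`
above the threshold, then `φ ≤ a + (B + K t_ε^λ) ‖·‖^{-λ}` everywhere, and one application of the
recursion improves this to `φ ≤ q a + ρ (B + K t_ε^λ) ‖·‖^{-λ}` above the threshold. Starting from
`a = K` and the fixed point `B = ρ K t_ε^λ / (1 - ρ)` of `B ↦ ρ (B + K t_ε^λ)`, iteration drives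
`a = q^n K` to `0`, leaving `φ(t) ≤ K t_ε^λ / (1 - ρ) · ‖t‖^{-λ}`.
-/

open MeasureTheory Filter
open scoped ENNReal

lemma one_le_rpow_mul_rpow_neg {x y r : ℝ} (hx : 0 < x) (hxy : x ≤ y) (hr : 0 ≤ r) :
    1 ≤ y ^ r * x ^ (-r) := by
  rw [Real.rpow_neg hx.le, ← div_eq_mul_inv, one_le_div (Real.rpow_pos_of_pos hx r)]
  exact Real.rpow_le_rpow hx.le hxy hr

lemma le_of_forall_pow_mul_add_le {y b q K : ℝ} (hq0 : 0 ≤ q) (hq1 : q < 1)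
    (h : ∀ n : ℕ, y ≤ q ^ n * K + b) : y ≤ b := by
  have hlim : Tendsto (fun n : ℕ => q ^ n * K + b) atTop (nhds (0 * K + b)) :=
    ((tendsto_pow_atTop_nhds_zero_of_lt_one hq0 hq1).mul_const K).add_const b
  simpa using ge_of_tendsto' hlim h

lemma sum_mul_iInf_le_sum_sum_mul {ι κ : Type*} [Fintype ι] [Fintype κ] {t : ι → ℝ}
    (ht : ∀ i, 0 ≤ t i) (A : ι → κ → ℝ) :
    (∑ i, t i) * ⨅ i, ∑ j, A i j ≤ ∑ j, ∑ i, t i * A i j := by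
  rw [Finset.sum_comm, Finset.sum_mul]
  refine Finset.sum_le_sum fun i _ => ?_
  rw [← Finset.mul_sum]
  exact mul_le_mul_of_nonneg_left (ciInf_le (Finite.bddBelow_range _) i) (ht i)

section RpowNeg

variable {Ω : Type*} [MeasurableSpace Ω] {μ : Measure Ω} {m : Ω → ℝ} {lam : ℝ}

lemma ae_pos_of_lintegral_rpow_neg_ne_top (hm : AEMeasurable m μ) (hlam : 0 < lam)
    (h : ∫⁻ ω, ENNReal.ofReal (m ω) ^ (-lam) ∂μ ≠ ∞) : ∀ᵐ ω ∂μ, 0 < m ω := by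
  filter_upwards [ae_lt_top' (hm.ennreal_ofReal.pow_const _) h] with ω hω
  by_contra hmω
  rw [ENNReal.ofReal_of_nonpos (not_lt.1 hmω), ENNReal.zero_rpow_of_neg (neg_neg_of_pos hlam)]
    at hω
  exact hω.ne rfl

lemma lintegral_ofReal_rpow_eq (hm : ∀ᵐ ω ∂μ, 0 < m ω) :
    ∫⁻ ω, ENNReal.ofReal (m ω ^ lam) ∂μ = ∫⁻ ω, ENNReal.ofReal (m ω) ^ lam ∂μ :=
  lintegral_congr_ae <| hm.mono fun _ hω => (ENNReal.ofReal_rpow_of_pos hω).symm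

lemma integrable_rpow_of_lintegral_ne_top (hm : AEMeasurable m μ) (hpos : ∀ᵐ ω ∂μ, 0 < m ω)
    (h : ∫⁻ ω, ENNReal.ofReal (m ω) ^ lam ∂μ ≠ ∞) : Integrable (fun ω => m ω ^ lam) μ := by
  have hnonneg : 0 ≤ᵐ[μ] fun ω => m ω ^ lam := hpos.mono fun _ hω => Real.rpow_nonneg hω.le _
  refine ⟨(hm.pow_const lam).aestronglyMeasurable, ?_⟩
  rw [hasFiniteIntegral_iff_ofReal hnonneg, lintegral_ofReal_rpow_eq hpos]
  exact h.lt_top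

lemma ofReal_integral_rpow_eq_lintegral (hm : AEMeasurable m μ) (hpos : ∀ᵐ ω ∂μ, 0 < m ω)
    (h : ∫⁻ ω, ENNReal.ofReal (m ω) ^ lam ∂μ ≠ ∞) :
    ENNReal.ofReal (∫ ω, m ω ^ lam ∂μ) = ∫⁻ ω, ENNReal.ofReal (m ω) ^ lam ∂μ := by
  rw [ofReal_integral_eq_lintegral_ofReal (integrable_rpow_of_lintegral_ne_top hm hpos h)
    (hpos.mono fun _ hω => Real.rpow_nonneg hω.le _), lintegral_ofReal_rpow_eq hpos]

end RpowNeg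

section Iteration

variable {Ω X : Type*} [MeasurableSpace Ω] {μ : Measure Ω} [IsProbabilityMeasure μ]
  {N φ : X → ℝ} {T : X → Ω → X} {m : Ω → ℝ} {K lam q tε a B : ℝ}

lemma le_add_mul_rpow_neg_of_pos (hφK : ∀ x, φ x ≤ K) (hK : 0 ≤ K) (ha : 0 ≤ a) (hB : 0 ≤ B)
    (hlam : 0 ≤ lam) (htε : 0 ≤ tε) (H : ∀ x, tε < N x → φ x ≤ a + B * N x ^ (-lam))
    {x : X} (hx : 0 < N x) : φ x ≤ a + (B + K * tε ^ lam) * N x ^ (-lam) := by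
  have hpow : 0 ≤ N x ^ (-lam) := Real.rpow_nonneg hx.le _
  have hKtε : 0 ≤ K * tε ^ lam := mul_nonneg hK (Real.rpow_nonneg htε _)
  rcases lt_or_ge tε (N x) with hlarge | hsmall
  · nlinarith [H x hlarge]
  · have := mul_le_mul_of_nonneg_left (one_le_rpow_mul_rpow_neg hx hsmall hlam) hK
    nlinarith [hφK x]

lemma le_add_mul_rpow_neg_of_le_integral (hφK : ∀ x, φ x ≤ K) (hK : 0 ≤ K) (ha : 0 ≤ a)
    (hB : 0 ≤ B) (hlam : 0 ≤ lam) (htε : 0 ≤ tε) (hq : 0 ≤ q)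
    (hφT : ∀ x, Integrable (fun ω => φ (T x ω)) μ) (hm : ∀ᵐ ω ∂μ, 0 < m ω)
    (hmi : Integrable (fun ω => m ω ^ (-lam)) μ) (hNT : ∀ x ω, N x * m ω ≤ N (T x ω))
    (hrec : ∀ x, tε < N x → φ x ≤ q * ∫ ω, φ (T x ω) ∂μ)
    (H : ∀ x, tε < N x → φ x ≤ a + B * N x ^ (-lam)) {x : X} (hx : tε < N x) :
    φ x ≤ q * a + q * (∫ ω, m ω ^ (-lam) ∂μ) * (B + K * tε ^ lam) * N x ^ (-lam) := by
  set c := B + K * tε ^ lam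
  have hc : 0 ≤ c := add_nonneg hB (mul_nonneg hK (Real.rpow_nonneg htε _))
  have hNx : 0 < N x := htε.trans_lt hx
  have hpt : ∀ᵐ ω ∂μ, φ (T x ω) ≤ a + c * N x ^ (-lam) * m ω ^ (-lam) := by
    filter_upwards [hm] with ω hω
    have hxω : 0 < N x * m ω := mul_pos hNx hω
    calc φ (T x ω) ≤ a + c * N (T x ω) ^ (-lam) :=
          le_add_mul_rpow_neg_of_pos hφK hK ha hB hlam htε H (hxω.trans_le (hNT x ω))
      _ ≤ a + c * (N x * m ω) ^ (-lam) := by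
          gcongr a + c * ?_
          exact Real.rpow_le_rpow_of_nonpos hxω (hNT x ω) (neg_nonpos.2 hlam)
      _ = a + c * N x ^ (-lam) * m ω ^ (-lam) := by
          rw [Real.mul_rpow hNx.le hω.le, mul_assoc]
  have hbound : Integrable (fun ω => a + c * N x ^ (-lam) * m ω ^ (-lam)) μ :=
    (integrable_const a).add (hmi.const_mul _)
  calc φ x ≤ q * ∫ ω, φ (T x ω) ∂μ := hrec x hx
    _ ≤ q * ∫ ω, (a + c * N x ^ (-lam) * m ω ^ (-lam)) ∂μ :=
        mul_le_mul_of_nonneg_left (integral_mono_ae (hφT x) hbound hpt) hq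
    _ = q * a + q * (∫ ω, m ω ^ (-lam) ∂μ) * c * N x ^ (-lam) := by
        rw [integral_add (integrable_const a) (hmi.const_mul _), integral_const,
          integral_const_mul]
        simp only [probReal_univ, one_smul]
        ring

theorem le_mul_rpow_neg_of_le_integral (hφK : ∀ x, φ x ≤ K) (hK : 0 ≤ K) (hlam : 0 ≤ lam)
    (htε : 0 ≤ tε) (hq0 : 0 ≤ q) (hq1 : q < 1)
    (hφT : ∀ x, Integrable (fun ω => φ (T x ω)) μ) (hm : ∀ᵐ ω ∂μ, 0 < m ω)
    (hmi : Integrable (fun ω => m ω ^ (-lam)) μ) (hρ : q * ∫ ω, m ω ^ (-lam) ∂μ < 1)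
    (hNT : ∀ x ω, N x * m ω ≤ N (T x ω))
    (hrec : ∀ x, tε < N x → φ x ≤ q * ∫ ω, φ (T x ω) ∂μ) {x : X} (hx : 0 < N x) :
    φ x ≤ K * tε ^ lam / (1 - q * ∫ ω, m ω ^ (-lam) ∂μ) * N x ^ (-lam) := by
  set ρ := q * ∫ ω, m ω ^ (-lam) ∂μ
  set c := K * tε ^ lam
  have hρ0 : 0 ≤ ρ := mul_nonneg hq0 (integral_nonneg_of_ae <|
    hm.mono fun _ hω => Real.rpow_nonneg hω.le _)
  have hc : 0 ≤ c := mul_nonneg hK (Real.rpow_nonneg htε _)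
  set B := ρ * c / (1 - ρ)
  have hB : 0 ≤ B := div_nonneg (mul_nonneg hρ0 hc) (by linarith)
  have hBc : B + c = c / (1 - ρ) := by
    simp only [B]
    field_simp [(by linarith : (1 - ρ) ≠ 0)]
    ring
  have hfix : ρ * (B + c) = B := by rw [hBc, mul_div_assoc']
  have hiter : ∀ n : ℕ, ∀ y, tε < N y → φ y ≤ q ^ n * K + B * N y ^ (-lam) := by
    intro n
    induction n with
    | zero =>
      intro y hy
      have : 0 ≤ B * N y ^ (-lam) := mul_nonneg hB (Real.rpow_nonneg (htε.trans hy.le) _)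
      simpa using le_add_of_le_of_nonneg (hφK y) this
    | succ n ih =>
      intro y hy
      have := le_add_mul_rpow_neg_of_le_integral hφK hK (by positivity) hB hlam htε hq0 hφT hm
        hmi hNT hrec ih hy
      rwa [← mul_assoc, ← pow_succ', hfix] at this
  have hlimit : ∀ y, tε < N y → φ y ≤ 0 + B * N y ^ (-lam) := fun y hy => by
    simpa using le_of_forall_pow_mul_add_le hq0 hq1 fun n => hiter n y hy
  have := le_add_mul_rpow_neg_of_pos hφK hK le_rfl hB hlam htε hlimit hx
  rwa [zero_add, hBc] at this

end Iteration

theorem mandelbrot_decay_lemma_general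
    {Ω : Type*} [MeasurableSpace Ω] (μ : Measure Ω) [IsProbabilityMeasure μ]
    {p : ℕ} (lam : ℝ) (hlam : 0 < lam)
    (φ : (Fin p → ℝ) → ℝ) (hφmeas : Measurable φ)
    (hφnonneg : ∀ t, 0 ≤ φ t) (hφbdd : ∃ K : ℝ, ∀ t, φ t ≤ K)
    (A : Ω → Fin p → Fin p → ℝ) (hAmeas : Measurable A)
    (hApos : ∀ ω i j, 0 ≤ A ω i j)
    (q : ℝ) (hq0 : 0 < q) (hq1 : q < 1) (tε : ℝ) (htε : 0 < tε)
    (hrec : ∀ t : Fin p → ℝ, (∀ j, 0 ≤ t j) → tε < ∑ j, t j →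
      φ t ≤ q * ∫ ω, φ (fun j => ∑ i, t i * A ω i j) ∂μ)
    (hcontr : ENNReal.ofReal q *
      ∫⁻ ω, (ENNReal.ofReal (⨅ i, ∑ j, A ω i j)) ^ (-lam) ∂μ < 1) :
    ∃ C > 0, ∀ t : Fin p → ℝ, (∀ j, 0 ≤ t j) → t ≠ 0 →
      φ t ≤ C * (∑ j, t j) ^ (-lam) := by
  obtain ⟨K, hφK⟩ := hφbdd
  set m : Ω → ℝ := fun ω => ⨅ i, ∑ j, A ω i j
  have hm : Measurable m := by fun_prop
  have hfin : ∫⁻ ω, ENNReal.ofReal (m ω) ^ (-lam) ∂μ ≠ ∞ :=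
    (ENNReal.lt_top_of_mul_ne_top_right (hcontr.trans ENNReal.one_lt_top).ne
      (by simpa using hq0)).ne
  have hpos := ae_pos_of_lintegral_rpow_neg_ne_top hm.aemeasurable hlam hfin
  have hρ : q * ∫ ω, m ω ^ (-lam) ∂μ < 1 := by
    rwa [← ENNReal.ofReal_lt_one, ENNReal.ofReal_mul hq0.le,
      ofReal_integral_rpow_eq_lintegral hm.aemeasurable hpos hfin]
  let T (t : {t : Fin p → ℝ // ∀ j, 0 ≤ t j}) (ω : Ω) : {t : Fin p → ℝ // ∀ j, 0 ≤ t j} :=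
    ⟨fun j => ∑ i, t.1 i * A ω i j,
      fun j => Finset.sum_nonneg fun i _ => mul_nonneg (t.2 i) (hApos ω i j)⟩
  have hφT (t) : Integrable (fun ω => φ (T t ω).1) μ :=
    .of_bound (hφmeas.comp (by fun_prop)).aestronglyMeasurable K <| .of_forall fun ω => by
      rw [Real.norm_of_nonneg (hφnonneg _)]
      exact hφK _
  refine ⟨max (K * tε ^ lam / (1 - q * ∫ ω, m ω ^ (-lam) ∂μ)) 1, lt_max_of_lt_right one_pos,
    fun t ht hne => ?_⟩
  have hs : 0 < ∑ j, t j := Fintype.sum_pos (lt_of_le_of_ne ht (Ne.symm hne))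
  refine (le_mul_rpow_neg_of_le_integral (N := fun s => ∑ j, s.1 j) (φ := fun s => φ s.1)
    (T := T) (fun s => hφK s.1) ((hφnonneg 0).trans (hφK 0)) hlam.le htε.le hq0.le hq1 hφT hpos
    (integrable_rpow_of_lintegral_ne_top hm.aemeasurable hpos hfin) hρ
    (fun s ω => sum_mul_iInf_le_sum_sum_mul s.2 (A ω)) (fun s hs => hrec s.1 s.2 hs)
    (x := ⟨t, ht⟩) hs).trans ?_
  exact mul_le_mul_of_nonneg_right (le_max_left _ 1) (Real.rpow_nonneg hs.le _)

/-- **Lemma 5.1.** If a bounded nonnegative measurable function `φ` on `[0,∞)^p` satisfies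
`φ(t) ≤ q E[φ(tA)]` for `‖t‖ > t_ε`, where `A` is a nonnegative random matrix which is not
a.s. zero, and if `q E[(min_i Σ_j a_{ij})^{-λ}] < 1`, then `φ(t) = O(‖t‖^{-λ})`; in fact
`φ(t) ≤ C ‖t‖^{-λ}` for all nonzero `t ∈ [0,∞)^p`. -/
theorem mandelbrot_decay_lemma
    {Ω : Type*} [MeasurableSpace Ω] (μ : Measure Ω) [IsProbabilityMeasure μ]
    {p : ℕ} (hp : 0 < p) (lam : ℝ) (hlam : 0 < lam)
    (φ : (Fin p → ℝ) → ℝ) (hφmeas : Measurable φ)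
    (hφnonneg : ∀ t, 0 ≤ φ t) (hφbdd : ∃ K : ℝ, ∀ t, φ t ≤ K)
    (A : Ω → Fin p → Fin p → ℝ) (hAmeas : Measurable A)
    (hApos : ∀ ω i j, 0 ≤ A ω i j)
    (hAne : ¬ (∀ᵐ ω ∂μ, ∀ i j, A ω i j = 0))
    (q : ℝ) (hq0 : 0 < q) (hq1 : q < 1) (tε : ℝ) (htε : 0 < tε)
    (hrec : ∀ t : Fin p → ℝ, (∀ j, 0 ≤ t j) → tε < ∑ j, t j →
      φ t ≤ q * ∫ ω, φ (fun j => ∑ i, t i * A ω i j) ∂μ)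
    (hcontr : ENNReal.ofReal q *
      ∫⁻ ω, (ENNReal.ofReal (⨅ i, ∑ j, A ω i j)) ^ (-lam) ∂μ < 1) :
    ∃ C > 0, ∀ t : Fin p → ℝ, (∀ j, 0 ≤ t j) → t ≠ 0 →
      φ t ≤ C * (∑ j, t j) ^ (-lam) :=
  mandelbrot_decay_lemma_general μ lam hlam φ hφmeas hφnonneg hφbdd A hAmeas hApos q hq0 hq1 tε htε
    hrec hcontr
end

section
/- Let X be a random variable with P(X > 0) = 1 and let 0 < a < ∞. Consider the statements: (i) E[X^{−a}] < ∞; (ii) E[e^{−tX}] = O(t^{−a}) as t → ∞; (iii) P(X ≤ x) = O(x^a) as x → 0; (iv) for every b ∈ (0,a), E[X^{−b}] < ∞. Then the following implications hold: (i) implies (ii); (ii) and (iii) are equivalent; and (iii) implies (iv). -/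
/-!
(i) ⟹ (ii) integrates the pointwise bound `e^{-u} ≤ a^a u^{-a}`, and (ii) ⟹ (iii) is the Chernoff
bound `P(X ≤ x) ≤ e · E[e^{-X/x}]`. For the other two implications, first enlarge `C` so that
`P(X ≤ x) ≤ C x^a` holds for all `x > 0`, then use the layer-cake formula:
`P(e^{-tX} > s) ≤ P(X ≤ -log s / t) ≤ C t^{-a} (-log s)^a`, which is at most a multiple of
`t^{-a} s^{-1/2}` on `(0, 1)`, and `P(X^{-b} > s) ≤ C s^{-a/b}`, integrable at infinity as `a/b > 1`.
-/

open MeasureTheory ProbabilityTheory Real Set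

lemma rpow_le_rpow_mul_exp {a u : ℝ} (ha : 0 < a) (hu : 0 ≤ u) : u ^ a ≤ a ^ a * exp u := by
  have hua : u / a ≤ exp (u / a) := by linarith [add_one_le_exp (u / a)]
  calc u ^ a = a ^ a * (u / a) ^ a := by
        rw [← mul_rpow ha.le (by positivity), mul_div_cancel₀ _ ha.ne']
    _ ≤ a ^ a * exp (u / a) ^ a := by gcongr
    _ = a ^ a * exp u := by rw [← exp_mul, div_mul_cancel₀ _ ha.ne']

lemma exp_neg_le_mul_rpow_neg {a u : ℝ} (ha : 0 < a) (hu : 0 < u) :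
    exp (-u) ≤ a ^ a * u ^ (-a) := by
  rw [rpow_neg hu.le, ← div_eq_mul_inv, le_div_iff₀ (by positivity)]
  calc exp (-u) * u ^ a ≤ exp (-u) * (a ^ a * exp u) := by
        gcongr; exact rpow_le_rpow_mul_exp ha hu.le
    _ = a ^ a := by rw [mul_left_comm, ← exp_add, neg_add_cancel, exp_zero, mul_one]

lemma neg_log_rpow_le {a s : ℝ} (ha : 0 < a) (hs : 0 < s) (hs1 : s ≤ 1) :
    (-log s) ^ a ≤ (2 * a) ^ a * s ^ (-(1 / 2) : ℝ) := by
  have hlog : 0 ≤ -log s := neg_nonneg.2 (log_nonpos hs.le hs1)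
  calc (-log s) ^ a = 2 ^ a * (-log s / 2) ^ a := by
        rw [← mul_rpow (by norm_num) (by positivity), mul_div_cancel₀ _ two_ne_zero]
    _ ≤ 2 ^ a * (a ^ a * exp (-log s / 2)) := by
        gcongr; exact rpow_le_rpow_mul_exp ha (by positivity)
    _ = (2 * a) ^ a * s ^ (-(1 / 2) : ℝ) := by
        rw [mul_rpow (by norm_num) ha.le, rpow_def_of_pos hs]; ring_nf

section

variable {Ω : Type*} [MeasurableSpace Ω] {μ : Measure Ω} {X : Ω → ℝ} {a : ℝ}

def HasLaplaceDecay (μ : Measure Ω) (X : Ω → ℝ) (a : ℝ) : Prop :=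
  ∃ C > 0, ∃ t₀ > 0, ∀ t : ℝ, t₀ ≤ t → ∫ ω, exp (-(t * X ω)) ∂μ ≤ C * t ^ (-a)

def HasLeftTailDecay (μ : Measure Ω) (X : Ω → ℝ) (a : ℝ) : Prop :=
  ∃ C > 0, ∃ x₀ > 0, ∀ x : ℝ, 0 < x → x ≤ x₀ → (μ {ω | X ω ≤ x}).toReal ≤ C * x ^ a

lemma integrable_exp_neg_mul [IsFiniteMeasure μ] (hX : Measurable X)
    (hXpos : ∀ᵐ ω ∂μ, 0 < X ω) {t : ℝ} (ht : 0 ≤ t) :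
    Integrable (fun ω => exp (-(t * X ω))) μ := by
  refine (integrable_const 1).mono' (by fun_prop) ?_
  filter_upwards [hXpos] with ω hω
  rw [norm_of_nonneg (exp_pos _).le, exp_le_one_iff]
  exact neg_nonpos.2 (mul_nonneg ht hω.le)

lemma hasLaplaceDecay_of_lintegral_rpow_neg_lt_top [IsFiniteMeasure μ] (hX : Measurable X)
    (hXpos : ∀ᵐ ω ∂μ, 0 < X ω) (ha : 0 < a)
    (h : ∫⁻ ω, ENNReal.ofReal (X ω ^ (-a)) ∂μ < ⊤) : HasLaplaceDecay μ X a := by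
  have hXa_nonneg : 0 ≤ᵐ[μ] fun ω => X ω ^ (-a) :=
    hXpos.mono fun ω hω => (rpow_pos_of_pos hω _).le
  have hint : Integrable (fun ω => X ω ^ (-a)) μ :=
    ⟨(hX.pow_const _).aestronglyMeasurable, (hasFiniteIntegral_iff_ofReal hXa_nonneg).2 h⟩
  set I := ∫ ω, X ω ^ (-a) ∂μ
  have hI : 0 ≤ I := integral_nonneg_of_ae hXa_nonneg
  refine ⟨a ^ a * (I + 1), by positivity, 1, one_pos, fun t ht => ?_⟩
  have ht0 : 0 < t := one_pos.trans_le ht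
  calc ∫ ω, exp (-(t * X ω)) ∂μ ≤ ∫ ω, a ^ a * t ^ (-a) * X ω ^ (-a) ∂μ := by
        refine integral_mono_ae (integrable_exp_neg_mul hX hXpos ht0.le) (hint.const_mul _) ?_
        filter_upwards [hXpos] with ω hω
        calc exp (-(t * X ω)) ≤ a ^ a * (t * X ω) ^ (-a) :=
              exp_neg_le_mul_rpow_neg ha (by positivity)
          _ = a ^ a * t ^ (-a) * X ω ^ (-a) := by rw [mul_rpow ht0.le hω.le, mul_assoc]
    _ = a ^ a * I * t ^ (-a) := by rw [integral_const_mul]; ring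
    _ ≤ a ^ a * (I + 1) * t ^ (-a) := by gcongr; linarith

lemma HasLaplaceDecay.hasLeftTailDecay [IsFiniteMeasure μ] (hX : Measurable X)
    (hXpos : ∀ᵐ ω ∂μ, 0 < X ω) (h : HasLaplaceDecay μ X a) : HasLeftTailDecay μ X a := by
  obtain ⟨C, hC, t₀, ht₀, hlaplace⟩ := h
  refine ⟨exp 1 * C, by positivity, t₀⁻¹, by positivity, fun x hx hxt₀ => ?_⟩
  have hinv : t₀ ≤ x⁻¹ := (le_inv_comm₀ hx ht₀).1 hxt₀
  calc (μ {ω | X ω ≤ x}).toReal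
      ≤ exp (-(-x⁻¹) * x) * mgf X μ (-x⁻¹) := by
        refine measure_le_le_exp_mul_mgf x (by simpa using hx.le) ?_
        simpa only [neg_mul] using integrable_exp_neg_mul hX hXpos (inv_nonneg.2 hx.le)
    _ = exp 1 * ∫ ω, exp (-(x⁻¹ * X ω)) ∂μ := by
        simp only [mgf, neg_neg, neg_mul, inv_mul_cancel₀ hx.ne']
    _ ≤ exp 1 * (C * x⁻¹ ^ (-a)) := by gcongr; exact hlaplace _ hinv
    _ = exp 1 * C * x ^ a := by rw [inv_rpow hx.le, rpow_neg hx.le, inv_inv, mul_assoc]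

lemma HasLeftTailDecay.exists_forall_measure_le [IsFiniteMeasure μ] (h : HasLeftTailDecay μ X a)
    (ha : 0 ≤ a) : ∃ C > 0, ∀ x > 0, μ {ω | X ω ≤ x} ≤ ENNReal.ofReal (C * x ^ a) := by
  obtain ⟨C, hC, x₀, hx₀, hsmall⟩ := h
  refine ⟨max C (μ.real univ / x₀ ^ a), lt_max_of_lt_left hC, fun x hx => ?_⟩
  rw [← ofReal_measureReal]
  refine ENNReal.ofReal_le_ofReal ?_
  rcases le_or_gt x x₀ with hxx₀ | hx₀x
  · exact (hsmall x hx hxx₀).trans (by gcongr; exact le_max_left _ _)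
  · calc μ.real {ω | X ω ≤ x} ≤ μ.real univ := measureReal_mono (subset_univ _)
      _ = μ.real univ / x₀ ^ a * x₀ ^ a := by field_simp
      _ ≤ max C (μ.real univ / x₀ ^ a) * x ^ a := by gcongr; exact le_max_right _ _

lemma lintegral_Ioc_ofReal_mul_rpow_neg_half {K : ℝ} (hK : 0 ≤ K) :
    ∫⁻ s in Ioc 0 1, ENNReal.ofReal (K * s ^ (-(1 / 2) : ℝ)) = ENNReal.ofReal (2 * K) := by
  rw [← ofReal_integral_eq_lintegral_ofReal
      ((intervalIntegral.intervalIntegrable_rpow' (by norm_num)).1.const_mul K)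
      (ae_restrict_of_forall_mem measurableSet_Ioc fun s hs => by positivity [hs.1]),
    integral_const_mul, ← intervalIntegral.integral_of_le zero_le_one,
    integral_rpow (Or.inl (by norm_num))]
  norm_num [mul_comm]

lemma measure_lt_exp_neg_mul_le_indicator (hXpos : ∀ᵐ ω ∂μ, 0 < X ω) (ha : 0 < a) {C : ℝ}
    (hC : 0 ≤ C) (htail : ∀ x > 0, μ {ω | X ω ≤ x} ≤ ENNReal.ofReal (C * x ^ a))
    {t s : ℝ} (ht : 0 < t) (hs : 0 < s) :
    μ {ω | s < exp (-(t * X ω))} ≤ (Ioc 0 1).indicator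
      (fun s => ENNReal.ofReal (C * (2 * a) ^ a * t ^ (-a) * s ^ (-(1 / 2) : ℝ))) s := by
  rcases lt_or_ge s 1 with hs1 | hs1
  · rw [indicator_of_mem (show s ∈ Ioc 0 1 from ⟨hs, hs1.le⟩)]
    have hsub : {ω | s < exp (-(t * X ω))} ⊆ {ω | X ω ≤ -log s / t} := fun ω hω => by
      rw [mem_ofPred_eq, le_div_iff₀ ht]
      linarith [(log_lt_iff_lt_exp hs).2 hω]
    calc μ {ω | s < exp (-(t * X ω))} ≤ ENNReal.ofReal (C * (-log s / t) ^ a) :=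
          (measure_mono hsub).trans (htail _ (div_pos (neg_pos.2 (log_neg hs hs1)) ht))
      _ ≤ ENNReal.ofReal (C * (2 * a) ^ a * t ^ (-a) * s ^ (-(1 / 2) : ℝ)) := by
          refine ENNReal.ofReal_le_ofReal ?_
          rw [div_rpow (neg_nonneg.2 (log_nonpos hs.le hs1.le)) ht.le, div_eq_mul_inv,
            ← rpow_neg ht.le]
          calc C * ((-log s) ^ a * t ^ (-a))
              ≤ C * ((2 * a) ^ a * s ^ (-(1 / 2) : ℝ) * t ^ (-a)) := by
                gcongr; exact neg_log_rpow_le ha hs hs1.le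
            _ = C * (2 * a) ^ a * t ^ (-a) * s ^ (-(1 / 2) : ℝ) := by ring
  · refine le_of_eq_of_le (measure_mono_null (fun ω hω => ?_) (ae_iff.1 hXpos)) zero_le
    have : 0 < -(t * X ω) := one_lt_exp_iff.1 (hs1.trans_lt hω)
    simp only [mem_ofPred_eq, not_lt]
    nlinarith

lemma HasLeftTailDecay.hasLaplaceDecay [IsFiniteMeasure μ] (hX : Measurable X)
    (hXpos : ∀ᵐ ω ∂μ, 0 < X ω) (ha : 0 < a) (h : HasLeftTailDecay μ X a) :
    HasLaplaceDecay μ X a := by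
  obtain ⟨C, hC, htail⟩ := h.exists_forall_measure_le ha.le
  refine ⟨2 * C * (2 * a) ^ a, by positivity, 1, one_pos, fun t ht => ?_⟩
  have ht0 : 0 < t := one_pos.trans_le ht
  set K := C * (2 * a) ^ a * t ^ (-a)
  have hmeas : Measurable fun ω => exp (-(t * X ω)) := by fun_prop
  have hexp_nonneg : 0 ≤ᵐ[μ] fun ω => exp (-(t * X ω)) := ae_of_all _ fun ω => (exp_pos _).le
  calc ∫ ω, exp (-(t * X ω)) ∂μ
      = (∫⁻ s in Ioi 0, μ {ω | s < exp (-(t * X ω))}).toReal := by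
        rw [integral_eq_lintegral_of_nonneg_ae hexp_nonneg hmeas.aestronglyMeasurable,
          lintegral_eq_lintegral_meas_lt μ hexp_nonneg hmeas.aemeasurable]
    _ ≤ 2 * K := by
        refine ENNReal.toReal_le_of_le_ofReal (by positivity) ?_
        calc ∫⁻ s in Ioi 0, μ {ω | s < exp (-(t * X ω))}
            ≤ ∫⁻ s, (Ioc 0 1).indicator (fun s => ENNReal.ofReal (K * s ^ (-(1 / 2) : ℝ))) s :=
              (setLIntegral_mono' measurableSet_Ioi fun s hs =>
                measure_lt_exp_neg_mul_le_indicator hXpos ha hC.le htail ht0 hs).trans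
                (setLIntegral_le_lintegral _ _)
          _ = ENNReal.ofReal (2 * K) := by
              rw [lintegral_indicator measurableSet_Ioc,
                lintegral_Ioc_ofReal_mul_rpow_neg_half (by positivity)]
    _ = 2 * C * (2 * a) ^ a * t ^ (-a) := by ring

lemma HasLeftTailDecay.lintegral_rpow_neg_lt_top [IsFiniteMeasure μ] (hX : Measurable X)
    (hXpos : ∀ᵐ ω ∂μ, 0 < X ω) (h : HasLeftTailDecay μ X a) {b : ℝ} (hb : 0 < b) (hba : b < a) :
    ∫⁻ ω, ENNReal.ofReal (X ω ^ (-b)) ∂μ < ⊤ := by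
  obtain ⟨C, -, htail⟩ := h.exists_forall_measure_le (hb.trans hba).le
  have hexp : (-b)⁻¹ * a < -1 := by
    rw [inv_neg, neg_mul, neg_lt_neg_iff, inv_mul_eq_div, one_lt_div hb]; exact hba
  have hlevel : ∀ s > 0, μ {ω | s < X ω ^ (-b)} ≤ ENNReal.ofReal (C * s ^ ((-b)⁻¹ * a)) := by
    intro s hs
    have hsub : {ω | s < X ω ^ (-b)} ≤ᵐ[μ] {ω | X ω ≤ s ^ (-b)⁻¹} := by
      filter_upwards [hXpos] with ω hω hlt
      calc X ω = (X ω ^ (-b)) ^ (-b)⁻¹ := (rpow_rpow_inv hω.le (by linarith)).symm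
        _ ≤ s ^ (-b)⁻¹ := rpow_le_rpow_of_nonpos hs (le_of_lt hlt) (by simpa using hb.le)
    calc μ {ω | s < X ω ^ (-b)} ≤ μ {ω | X ω ≤ s ^ (-b)⁻¹} := measure_mono_ae hsub
      _ ≤ ENNReal.ofReal (C * (s ^ (-b)⁻¹) ^ a) := htail _ (by positivity)
      _ = ENNReal.ofReal (C * s ^ ((-b)⁻¹ * a)) := by rw [← rpow_mul hs.le]
  rw [lintegral_eq_lintegral_meas_lt μ (hXpos.mono fun ω hω => (rpow_pos_of_pos hω _).le)
      (hX.pow_const _).aemeasurable, ← Ioc_union_Ioi_eq_Ioi zero_le_one,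
    lintegral_union measurableSet_Ioi Ioc_disjoint_Ioi_same]
  refine ENNReal.add_lt_top.2 ⟨?_, ?_⟩
  · calc ∫⁻ s in Ioc 0 1, μ {ω | s < X ω ^ (-b)} ≤ ∫⁻ _ in Ioc (0 : ℝ) 1, μ univ :=
          setLIntegral_mono measurable_const fun _ _ => measure_mono (subset_univ _)
      _ < ⊤ := by simp [measure_lt_top]
  · calc ∫⁻ s in Ioi 1, μ {ω | s < X ω ^ (-b)}
        ≤ ∫⁻ s in Ioi 1, ENNReal.ofReal (C * s ^ ((-b)⁻¹ * a)) :=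
          setLIntegral_mono' measurableSet_Ioi fun s hs => hlevel s (zero_lt_one.trans hs)
      _ < ⊤ := ((integrableOn_Ioi_rpow_of_lt hexp one_pos).const_mul C).lintegral_lt_top

end

/-- **Lemma 5.2** (Liu 1999, Lemma 4.4). For a strictly positive random variable `X` and
`0 < a < ∞`, with
(i) `E[X^{-a}] < ∞`,
(ii) `E[e^{-tX}] = O(t^{-a})` as `t → ∞`,
(iii) `P(X ≤ x) = O(x^a)` as `x → 0`,
(iv) `∀ b ∈ (0,a), E[X^{-b}] < ∞`,
one has (i) ⟹ (ii), (ii) ⟺ (iii) and (iii) ⟹ (iv). -/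
theorem harmonic_moment_equivalences
    {Ω : Type*} [MeasurableSpace Ω] (μ : Measure Ω) [IsProbabilityMeasure μ]
    (X : Ω → ℝ) (hXmeas : Measurable X) (hXpos : ∀ᵐ ω ∂μ, 0 < X ω)
    (a : ℝ) (ha : 0 < a) :
    (((∫⁻ ω, ENNReal.ofReal (X ω ^ (-a)) ∂μ) < ⊤) →
      (∃ C > 0, ∃ t₀ > 0, ∀ t : ℝ, t₀ ≤ t →
        ∫ ω, Real.exp (-(t * X ω)) ∂μ ≤ C * t ^ (-a))) ∧
    ((∃ C > 0, ∃ t₀ > 0, ∀ t : ℝ, t₀ ≤ t →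
        ∫ ω, Real.exp (-(t * X ω)) ∂μ ≤ C * t ^ (-a)) ↔
      (∃ C > 0, ∃ x₀ > 0, ∀ x : ℝ, 0 < x → x ≤ x₀ →
        (μ {ω | X ω ≤ x}).toReal ≤ C * x ^ a)) ∧
    ((∃ C > 0, ∃ x₀ > 0, ∀ x : ℝ, 0 < x → x ≤ x₀ →
        (μ {ω | X ω ≤ x}).toReal ≤ C * x ^ a) →
      (∀ b : ℝ, 0 < b → b < a → (∫⁻ ω, ENNReal.ofReal (X ω ^ (-b)) ∂μ) < ⊤)) :=
  ⟨hasLaplaceDecay_of_lintegral_rpow_neg_lt_top hXmeas hXpos ha,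
    ⟨HasLaplaceDecay.hasLeftTailDecay hXmeas hXpos,
      HasLeftTailDecay.hasLaplaceDecay hXmeas hXpos ha⟩,
    fun h _ hb hba => HasLeftTailDecay.lintegral_rpow_neg_lt_top hXmeas hXpos h hb hba⟩
end

section
/- Let p ≥ 1 be an integer, λ > 0, k ≥ 1, and let A_1, …, A_k be independent, identically distributed p×p random matrices with entries in [0,∞), each distributed as A = (a_{ij}). Then for every nonzero t ∈ [0,∞)^p: E[‖t A_1 A_2 ⋯ A_k‖^{−λ}] ≤ ‖t‖^{−λ} · (E[(min_{1≤i≤p} Σ_{j=1}^p a_{ij})^{−λ}])^k. -/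
/-!
Since `‖t B‖ = Σ_i t_i Σ_j b_{ij} ≥ ‖t‖ · min_i Σ_j b_{ij}` for nonnegative `t` and `B`, iterating
along the product gives the pointwise bound `‖t A_1 ⋯ A_k‖ ≥ ‖t‖ · ∏_l min_i Σ_j (A_l)_{ij}`.
Raising to the power `-λ` reverses it, and the expectation of the resulting product of
independent, identically distributed factors is the `k`-th power of one expectation.
-/

open MeasureTheory ProbabilityTheory

theorem ENNReal.rpow_neg_le_rpow_neg {x y : ENNReal} {z : ℝ} (hz : 0 ≤ z) (h : x ≤ y) :
    y ^ (-z) ≤ x ^ (-z) := by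
  rw [ENNReal.rpow_neg, ENNReal.rpow_neg]
  exact ENNReal.inv_le_inv.2 (ENNReal.rpow_le_rpow h hz)

namespace Matrix

variable {m n : Type*}

/-- For empty `m` this is `0`, the junk value of `⨅` on `ℝ`. -/
noncomputable def minRowSum [Fintype n] (B : Matrix m n ℝ) : ℝ := ⨅ i, ∑ j, B i j

theorem minRowSum_nonneg [Fintype n] {B : Matrix m n ℝ} (hB : ∀ i j, 0 ≤ B i j) :
    0 ≤ B.minRowSum :=
  Real.iInf_nonneg fun i => Finset.sum_nonneg fun j _ => hB i j

theorem minRowSum_le_sum_row [Finite m] [Fintype n] (B : Matrix m n ℝ) (i : m) :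
    B.minRowSum ≤ ∑ j, B i j :=
  ciInf_le (Set.finite_range _).bddBelow i

theorem vecMul_nonneg [Fintype m] {t : m → ℝ} {B : Matrix m n ℝ} (ht : ∀ i, 0 ≤ t i)
    (hB : ∀ i j, 0 ≤ B i j) (j : n) : 0 ≤ (t ᵥ* B) j :=
  Finset.sum_nonneg fun i _ => mul_nonneg (ht i) (hB i j)

theorem sum_vecMul_eq_sum_mul_sum_row [Fintype m] [Fintype n] (t : m → ℝ) (B : Matrix m n ℝ) :
    ∑ j, (t ᵥ* B) j = ∑ i, t i * ∑ j, B i j := by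
  simp only [vecMul, dotProduct, Finset.mul_sum]
  exact Finset.sum_comm

theorem sum_mul_minRowSum_le_sum_vecMul [Fintype m] [Fintype n] {t : m → ℝ} (ht : ∀ i, 0 ≤ t i)
    (B : Matrix m n ℝ) :
    (∑ i, t i) * B.minRowSum ≤ ∑ j, (t ᵥ* B) j := by
  rw [sum_vecMul_eq_sum_mul_sum_row, Finset.sum_mul]
  exact Finset.sum_le_sum fun i _ => mul_le_mul_of_nonneg_left (minRowSum_le_sum_row B i) (ht i)

theorem sum_mul_prod_minRowSum_le_sum_vecMul_prod [Fintype n] [DecidableEq n]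
    (L : List (Matrix n n ℝ)) (hL : ∀ B ∈ L, ∀ i j, 0 ≤ B i j) {t : n → ℝ} (ht : ∀ i, 0 ≤ t i) :
    (∑ i, t i) * (L.map minRowSum).prod ≤ ∑ j, (t ᵥ* L.prod) j := by
  induction L generalizing t with
  | nil => simp
  | cons B L ih =>
    have hB := hL B List.mem_cons_self
    have hL' : ∀ B' ∈ L, ∀ i j, 0 ≤ B' i j := fun B' hB' => hL B' (List.mem_cons_of_mem B hB')
    have hprod : 0 ≤ (L.map minRowSum).prod :=
      List.prod_nonneg fun _ ha => by
        obtain ⟨B', hB', rfl⟩ := List.mem_map.1 ha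
        exact minRowSum_nonneg (hL' B' hB')
    calc (∑ i, t i) * ((B :: L).map minRowSum).prod
        = ((∑ i, t i) * B.minRowSum) * (L.map minRowSum).prod := by simp [mul_assoc]
      _ ≤ (∑ j, (t ᵥ* B) j) * (L.map minRowSum).prod :=
        mul_le_mul_of_nonneg_right (sum_mul_minRowSum_le_sum_vecMul ht B) hprod
      _ ≤ ∑ j, ((t ᵥ* B) ᵥ* L.prod) j := ih hL' (vecMul_nonneg ht hB)
      _ = ∑ j, (t ᵥ* (B :: L).prod) j := by rw [List.prod_cons, vecMul_vecMul]

theorem ofReal_sum_vecMul_prod_ofFn_rpow_neg_le [Fintype n] [DecidableEq n] {k : ℕ}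
    (B : Fin k → Matrix n n ℝ) (hB : ∀ l i j, 0 ≤ B l i j) {t : n → ℝ} (ht : ∀ i, 0 ≤ t i)
    {lam : ℝ} (hlam : 0 ≤ lam) :
    ENNReal.ofReal (∑ j, (t ᵥ* (List.ofFn B).prod) j) ^ (-lam)
      ≤ ENNReal.ofReal (∑ i, t i) ^ (-lam) * ∏ l, ENNReal.ofReal (B l).minRowSum ^ (-lam) := by
  have hL : ∀ B' ∈ List.ofFn B, ∀ i j, 0 ≤ B' i j := by
    intro B' hB'
    obtain ⟨l, rfl⟩ := List.mem_ofFn.1 hB'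
    exact hB l
  have hreal : (∑ i, t i) * ∏ l, (B l).minRowSum ≤ ∑ j, (t ᵥ* (List.ofFn B).prod) j := by
    simpa [List.map_ofFn, List.prod_ofFn] using
      sum_mul_prod_minRowSum_le_sum_vecMul_prod _ hL ht
  refine (ENNReal.rpow_neg_le_rpow_neg hlam (ENNReal.ofReal_le_ofReal hreal)).trans_eq ?_
  rw [ENNReal.ofReal_mul (Finset.sum_nonneg fun i _ => ht i),
    ENNReal.ofReal_prod_of_nonneg fun l _ => minRowSum_nonneg (hB l),
    ENNReal.mul_rpow_of_ne_top ENNReal.ofReal_ne_top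
      (ENNReal.prod_ne_top fun l _ => ENNReal.ofReal_ne_top),
    ENNReal.prod_rpow_of_ne_top fun l _ => ENNReal.ofReal_ne_top]

end Matrix

theorem lintegral_prod_comp_eq_pow_of_iIndepFun {Ω ι β : Type*} [MeasurableSpace Ω]
    [MeasurableSpace β] [Fintype ι] {μ : Measure Ω} {X : ι → Ω → β}
    (hX : ∀ i, Measurable (X i)) (hindep : iIndepFun X μ) {i₀ : ι}
    (hident : ∀ i, μ.map (X i) = μ.map (X i₀)) {g : β → ENNReal} (hg : Measurable g) :
    ∫⁻ ω, ∏ i, g (X i ω) ∂μ = (∫⁻ ω, g (X i₀ ω) ∂μ) ^ Fintype.card ι := by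
  have hsame : ∀ i, ∫⁻ ω, g (X i ω) ∂μ = ∫⁻ ω, g (X i₀ ω) ∂μ := fun i => by
    rw [← lintegral_map hg (hX i), hident i, lintegral_map hg (hX i₀)]
  rw [lintegral_prod_eq_prod_lintegral_of_indepFun Finset.univ (fun i ω => g (X i ω))
      (hindep.comp (fun _ => g) fun _ => hg) fun i => hg.comp (hX i),
    Finset.prod_congr rfl fun i _ => hsame i, Finset.prod_const, Finset.card_univ]

theorem vecMul_chain_neg_moment_general
    {Ω : Type*} [MeasurableSpace Ω] (μ : Measure Ω)
    {p : ℕ} (lam : ℝ) (hlam : 0 < lam)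
    {k : ℕ} (hk : 1 ≤ k)
    (A : Fin k → Ω → Fin p → Fin p → ℝ)
    (hApos : ∀ l ω i j, 0 ≤ A l ω i j)
    (hAmeas : ∀ l, Measurable (A l))
    (hindep : iIndepFun A μ)
    (hident : ∀ l, μ.map (A l) = μ.map (A ⟨0, hk⟩))
    (t : Fin p → ℝ) (ht : ∀ j, 0 ≤ t j) :
    (∫⁻ ω, (ENNReal.ofReal (∑ j, Matrix.vecMul t
        ((List.ofFn fun l => Matrix.of (A l ω)).prod) j)) ^ (-lam) ∂μ)
      ≤ (ENNReal.ofReal (∑ j, t j)) ^ (-lam) *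
        (∫⁻ ω, (ENNReal.ofReal (⨅ i, ∑ j, A ⟨0, hk⟩ ω i j)) ^ (-lam) ∂μ) ^ k := by
  let g : (Fin p → Fin p → ℝ) → ENNReal := fun M => ENNReal.ofReal (Matrix.of M).minRowSum ^ (-lam)
  have hg : Measurable g := by unfold g Matrix.minRowSum; fun_prop
  have hprod : Measurable fun ω => ∏ l, g (A l ω) :=
    Finset.measurable_prod _ fun l _ => hg.comp (hAmeas l)
  calc _ ≤ ∫⁻ ω, ENNReal.ofReal (∑ j, t j) ^ (-lam) * ∏ l, g (A l ω) ∂μ :=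
        lintegral_mono fun ω => Matrix.ofReal_sum_vecMul_prod_ofFn_rpow_neg_le
          (fun l => Matrix.of (A l ω)) (hApos · ω) ht hlam.le
    _ = ENNReal.ofReal (∑ j, t j) ^ (-lam) * (∫⁻ ω, g (A ⟨0, hk⟩ ω) ∂μ) ^ k := by
        rw [lintegral_const_mul _ hprod,
          lintegral_prod_comp_eq_pow_of_iIndepFun hAmeas hindep hident hg, Fintype.card_fin]

/-- **Inequality (5.4).** If `A_1, …, A_k` are i.i.d. nonnegative `p×p` random matrices
distributed as `A = (a_{ij})`, then for every nonzero `t ∈ [0,∞)^p`,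
`E[‖t A_1 ⋯ A_k‖^{-λ}] ≤ ‖t‖^{-λ} (E[(min_i Σ_j a_{ij})^{-λ}])^k`
(with the convention `0^{-λ} = ∞`). -/
theorem vecMul_chain_neg_moment
    {Ω : Type*} [MeasurableSpace Ω] (μ : Measure Ω) [IsProbabilityMeasure μ]
    {p : ℕ} (hp : 0 < p) (lam : ℝ) (hlam : 0 < lam)
    {k : ℕ} (hk : 1 ≤ k)
    (A : Fin k → Ω → Fin p → Fin p → ℝ)
    (hApos : ∀ l ω i j, 0 ≤ A l ω i j)
    (hAmeas : ∀ l, Measurable (A l))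
    (hindep : iIndepFun A μ)
    (hident : ∀ l, μ.map (A l) = μ.map (A ⟨0, hk⟩))
    (t : Fin p → ℝ) (ht : ∀ j, 0 ≤ t j) (ht0 : t ≠ 0) :
    (∫⁻ ω, (ENNReal.ofReal (∑ j, Matrix.vecMul t
        ((List.ofFn fun l => Matrix.of (A l ω)).prod) j)) ^ (-lam) ∂μ)
      ≤ (ENNReal.ofReal (∑ j, t j)) ^ (-lam) *
        (∫⁻ ω, (ENNReal.ofReal (⨅ i, ∑ j, A ⟨0, hk⟩ ω i j)) ^ (-lam) ∂μ) ^ k :=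
  vecMul_chain_neg_moment_general μ lam hlam hk A hApos hAmeas hindep hident t ht
end

section
/- Let p ≥ 1 and n ≥ 1 be integers, let t ≥ 1 be a real number, and let B_1, …, B_n be p×p matrices with entries in [0,∞). Then for all indices i, j ∈ {1,…,p}: (B_1^{(t)} B_2^{(t)} ⋯ B_n^{(t)})_{ij} ≤ ((B_1 B_2 ⋯ B_n)_{ij})^t ≤ p^{(t−1)(n−1)} (B_1^{(t)} B_2^{(t)} ⋯ B_n^{(t)})_{ij}. -/
/-!
Expanding each entry of a product of nonnegative matrices as a sum over intermediate indices,
the claim reduces, one factor at a time, to two inequalities for nonnegative reals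
`x₁, …, x_p` and `t ≥ 1`: superadditivity `∑ xₖ ^ t ≤ (∑ xₖ) ^ t`, and the power-mean
inequality `(∑ xₖ) ^ t ≤ p ^ (t - 1) ∑ xₖ ^ t`. Each of the `n - 1` matrix multiplications
costs one factor `p ^ (t - 1)` in the second bound.
-/

open Matrix Finset

theorem Real.sum_rpow_le_rpow_sum {ι : Type*} (s : Finset ι) {f : ι → ℝ}
    (hf : ∀ i ∈ s, 0 ≤ f i) {t : ℝ} (ht : 1 ≤ t) :
    ∑ i ∈ s, f i ^ t ≤ (∑ i ∈ s, f i) ^ t := by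
  have split : ∀ x : ℝ, 0 ≤ x → x ^ t = x * x ^ (t - 1) := fun x hx => by
    rw [← Real.rpow_one_add' hx (by linarith)]
    ring_nf
  calc ∑ i ∈ s, f i ^ t = ∑ i ∈ s, f i * f i ^ (t - 1) :=
        sum_congr rfl fun i hi => split _ (hf i hi)
    _ ≤ ∑ i ∈ s, f i * (∑ j ∈ s, f j) ^ (t - 1) :=
        sum_le_sum fun i hi => mul_le_mul_of_nonneg_left
          (Real.rpow_le_rpow (hf i hi) (single_le_sum hf hi) (by linarith)) (hf i hi)
    _ = (∑ i ∈ s, f i) ^ t := by rw [← sum_mul, split _ (sum_nonneg hf)]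

namespace Matrix

section OrderedSemiring

variable {l m n R : Type*} [Fintype m] [Semiring R] [PartialOrder R] [IsOrderedRing R]

theorem mul_apply_nonneg {A : Matrix l m R} {B : Matrix m n R} (hA : ∀ i k, 0 ≤ A i k)
    (hB : ∀ k j, 0 ≤ B k j) (i : l) (j : n) : 0 ≤ (A * B) i j :=
  sum_nonneg fun k _ => mul_nonneg (hA i k) (hB k j)

theorem mul_apply_le_mul_apply_of_le {A : Matrix l m R} {B C : Matrix m n R}
    (hA : ∀ i k, 0 ≤ A i k) (hBC : ∀ k j, B k j ≤ C k j) (i : l) (j : n) :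
    (A * B) i j ≤ (A * C) i j :=
  sum_le_sum fun k _ => mul_le_mul_of_nonneg_left (hBC k j) (hA i k)

theorem list_prod_apply_nonneg [DecidableEq m] {L : List (Matrix m m R)}
    (hL : ∀ A ∈ L, ∀ i j, 0 ≤ A i j) (i j : m) : 0 ≤ L.prod i j :=
  List.prod_induction (fun A : Matrix m m R => ∀ i j, 0 ≤ A i j)
    (fun _ _ hA hB => mul_apply_nonneg hA hB)
    (fun i j => by rw [one_apply]; split_ifs <;> simp) hL i j

end OrderedSemiring

variable {l m n : Type*} [Fintype m] {t : ℝ}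

theorem map_rpow_mul_map_rpow_apply_le (ht : 1 ≤ t) {A : Matrix l m ℝ} {B : Matrix m n ℝ}
    (hA : ∀ i k, 0 ≤ A i k) (hB : ∀ k j, 0 ≤ B k j) (i : l) (j : n) :
    (A.map (· ^ t) * B.map (· ^ t)) i j ≤ (A * B) i j ^ t := by
  simp only [mul_apply, map_apply, ← Real.mul_rpow (hA _ _) (hB _ _)]
  exact Real.sum_rpow_le_rpow_sum _ (fun k _ => mul_nonneg (hA i k) (hB k j)) ht

theorem mul_apply_rpow_le (ht : 1 ≤ t) {A : Matrix l m ℝ} {B : Matrix m n ℝ}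
    (hA : ∀ i k, 0 ≤ A i k) (hB : ∀ k j, 0 ≤ B k j) (i : l) (j : n) :
    (A * B) i j ^ t ≤
      (Fintype.card m : ℝ) ^ (t - 1) * (A.map (· ^ t) * B.map (· ^ t)) i j := by
  simpa [mul_apply, Real.mul_rpow (hA _ _) (hB _ _)] using
    Real.rpow_sum_le_const_mul_sum_rpow_of_nonneg univ ht
      (fun k _ => mul_nonneg (hA i k) (hB k j))

variable [DecidableEq m]

theorem list_prod_map_rpow_apply_le (ht : 1 ≤ t) {L : List (Matrix m m ℝ)}
    (hL : ∀ A ∈ L, ∀ i j, 0 ≤ A i j) (i j : m) :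
    (L.map (·.map (· ^ t))).prod i j ≤ L.prod i j ^ t := by
  induction L generalizing i j with
  | nil =>
    rw [List.map_nil, List.prod_nil, one_apply]
    split_ifs <;> simp [Real.zero_rpow (by linarith : t ≠ 0)]
  | cons A L ih =>
    obtain ⟨hA, hL⟩ := List.forall_mem_cons.1 hL
    rw [List.map_cons, List.prod_cons, List.prod_cons]
    calc (A.map (· ^ t) * (L.map (·.map (· ^ t))).prod) i j
        ≤ (A.map (· ^ t) * L.prod.map (· ^ t)) i j :=
          mul_apply_le_mul_apply_of_le (fun i k => Real.rpow_nonneg (hA i k) t) (ih hL) i j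
      _ ≤ (A * L.prod) i j ^ t :=
          map_rpow_mul_map_rpow_apply_le ht hA (list_prod_apply_nonneg hL) i j

theorem mul_list_prod_apply_rpow_le (ht : 1 ≤ t) {A : Matrix m m ℝ} {L : List (Matrix m m ℝ)}
    (hA : ∀ i j, 0 ≤ A i j) (hL : ∀ B ∈ L, ∀ i j, 0 ≤ B i j) (i j : m) :
    (A * L.prod) i j ^ t ≤ ((Fintype.card m : ℝ) ^ (t - 1)) ^ L.length *
      (A.map (· ^ t) * (L.map (·.map (· ^ t))).prod) i j := by
  induction L generalizing A i j with
  | nil => simp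
  | cons B L ih =>
    obtain ⟨hB, hL⟩ := List.forall_mem_cons.1 hL
    set c := (Fintype.card m : ℝ) ^ (t - 1)
    rw [List.map_cons, List.prod_cons, List.prod_cons, List.length_cons]
    set P := (L.map (·.map (· ^ t))).prod
    calc (A * (B * L.prod)) i j ^ t
        ≤ c * (A.map (· ^ t) * (B * L.prod).map (· ^ t)) i j :=
          mul_apply_rpow_le ht hA (mul_apply_nonneg hB (list_prod_apply_nonneg hL)) i j
      _ ≤ c * (A.map (· ^ t) * c ^ L.length • (B.map (· ^ t) * P)) i j := by
          gcongr
          exact mul_apply_le_mul_apply_of_le (fun i k => Real.rpow_nonneg (hA i k) t)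
            (ih hB hL) i j
      _ = c ^ (L.length + 1) * (A.map (· ^ t) * (B.map (· ^ t) * P)) i j := by
          rw [Matrix.mul_smul, smul_apply, smul_eq_mul]
          ring

end Matrix

theorem entrywise_power_prod_bounds_general
    {p n : ℕ} (hn : 1 ≤ n) (t : ℝ) (ht : 1 ≤ t)
    (B : Fin n → Matrix (Fin p) (Fin p) ℝ) (hB : ∀ l i j, 0 ≤ B l i j)
    (i j : Fin p) :
    ((List.ofFn fun l => (B l).map (fun x => x ^ t)).prod) i j
        ≤ ((List.ofFn B).prod i j) ^ t ∧
    ((List.ofFn B).prod i j) ^ t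
        ≤ (p : ℝ) ^ ((t - 1) * ((n : ℝ) - 1)) *
          ((List.ofFn fun l => (B l).map (fun x => x ^ t)).prod) i j := by
  have hmap : (List.ofFn fun l => (B l).map (fun x => x ^ t))
      = (List.ofFn B).map (·.map (· ^ t)) := by
    rw [List.map_ofFn]
    rfl
  have hL : ∀ A ∈ List.ofFn B, ∀ i j, 0 ≤ A i j := List.forall_mem_ofFn_iff.2 hB
  refine ⟨hmap ▸ list_prod_map_rpow_apply_le ht hL i j, ?_⟩
  obtain ⟨m, rfl⟩ := Nat.exists_eq_add_of_le' hn
  have hexp : (p : ℝ) ^ ((t - 1) * (((m + 1 : ℕ) : ℝ) - 1)) = ((p : ℝ) ^ (t - 1)) ^ m := by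
    rw [← Real.rpow_natCast, ← Real.rpow_mul (Nat.cast_nonneg p)]
    push_cast
    ring_nf
  rw [hmap, hexp, List.ofFn_succ, List.map_cons, List.prod_cons, List.prod_cons]
  simpa using mul_list_prod_apply_rpow_le ht (hB 0)
    (List.forall_mem_ofFn_iff.2 fun l => hB l.succ) i j

/-- **Inequality (3.5).** For nonnegative `p×p` matrices `B_1, …, B_n` and `t ≥ 1`, writing
`B^{(t)}` for the entrywise `t`-th power, one has, entrywise,
`(B_1^{(t)} ⋯ B_n^{(t)})_{ij} ≤ ((B_1 ⋯ B_n)_{ij})^t ≤ p^{(t-1)(n-1)} (B_1^{(t)} ⋯ B_n^{(t)})_{ij}`. -/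
theorem entrywise_power_prod_bounds
    {p n : ℕ} (hp : 0 < p) (hn : 1 ≤ n) (t : ℝ) (ht : 1 ≤ t)
    (B : Fin n → Matrix (Fin p) (Fin p) ℝ) (hB : ∀ l i j, 0 ≤ B l i j)
    (i j : Fin p) :
    ((List.ofFn fun l => (B l).map (fun x => x ^ t)).prod) i j
        ≤ ((List.ofFn B).prod i j) ^ t ∧
    ((List.ofFn B).prod i j) ^ t
        ≤ (p : ℝ) ^ ((t - 1) * ((n : ℝ) - 1)) *
          ((List.ofFn fun l => (B l).map (fun x => x ^ t)).prod) i j :=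
  entrywise_power_prod_bounds_general hn t ht B hB i j
end
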